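/- arXiv:2404.04512 — 6 statements merged into one kernel-verified Lean document; each statement's English description precedes it below -/
import Mathlib

section
/- For every positive integer n, the quasi-Kostka matrix Q(n), whose rows and columns are indexed by the partitions of n listed in reverse lexicographic order (largest first) and whose (λ,μ)-entry is QK_{λ,μ}, is upper unitriangular: all diagonal entries equal 1 and all entries strictly below the diagonal equal 0. Consequently Q(n) is invertible and its inverse has integer entries. -/
/-!
An entry in row `i` (counting from `0`) of a semistandard tableau of partition shape is at
least `i + 1`, so the entries `≤ k` fit into the bottom `k` rows. Hence the weight of every
tableau of shape `λ` is dominated by `λ`, which excludes weights lexicographically larger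
than `λ`. If the weight is `λ` itself, the bound is attained for every `k`, which forces
every entry down to its row index plus one: the only tableau left is the superstandard
one, and it is quasi-Yamanouchi. A unitriangular matrix has determinant `1`, so its
inverse is integral.
-/

/-- A semistandard Young tableau (French notation) of shape given by the list `l` of row
lengths (row `0` is the bottom row).  Entries are positive integers; rows weakly increase
from left to right and columns strictly increase from bottom to top (entries outside the
shape are recorded as `0`). -/
structure SSYT (l : List ℕ) where
  entry : ℕ → ℕ → ℕ
  pos : ∀ i j, j < l.getD i 0 → 1 ≤ entry i j
  zeros : ∀ i j, ¬ j < l.getD i 0 → entry i j = 0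
  rowWeak : ∀ i j1 j2, j1 ≤ j2 → j2 < l.getD i 0 → entry i j1 ≤ entry i j2
  colStrict : ∀ i1 i2 j, i1 < i2 → j < l.getD i2 0 → entry i1 j < entry i2 j

/-- The cells of the Young diagram of `l`. -/
def cellsOf (l : List ℕ) : Finset (ℕ × ℕ) :=
  (Finset.range l.length).biUnion fun i =>
    (Finset.range (l.getD i 0)).image fun j => (i, j)

/-- The number of entries of `T` equal to `k`. -/
def wtOf {l : List ℕ} (T : SSYT l) (k : ℕ) : ℕ :=
  ((cellsOf l).filter fun c => T.entry c.1 c.2 = k).card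

/-- A tableau is quasi-Yamanouchi if whenever a value `k > 1` appears, some entry equal
to `k` lies in a strictly higher row than some entry equal to `k - 1`. -/
def IsQYT {l : List ℕ} (T : SSYT l) : Prop :=
  ∀ k, 2 ≤ k → (∃ c ∈ cellsOf l, T.entry c.1 c.2 = k) →
    ∃ c ∈ cellsOf l, ∃ c' ∈ cellsOf l,
      T.entry c.1 c.2 = k ∧ T.entry c'.1 c'.2 = k - 1 ∧ c'.1 < c.1

/-- `QK l α` : the number of quasi-Yamanouchi tableaux of shape `l` and weight `α`. -/
noncomputable def QK (l α : List ℕ) : ℕ :=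
  Set.ncard {T : SSYT l | IsQYT T ∧ ∀ i, wtOf T (i + 1) = α.getD i 0}

/-- `l` is (the list of parts of) a partition of `n`. -/
def IsPartitionOf (n : ℕ) (l : List ℕ) : Prop :=
  l.Pairwise (· ≥ ·) ∧ (∀ x ∈ l, 0 < x) ∧ l.sum = n

/-- `l` is (the list of parts of) a composition of `n`. -/
def IsCompositionOf (n : ℕ) (l : List ℕ) : Prop :=
  (∀ x ∈ l, 0 < x) ∧ l.sum = n

instance (n : ℕ) : DecidableEq (Composition n) := fun a b =>
  decidable_of_iff (a.blocks = b.blocks) (by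
    constructor
    · intro h; ext1; exact h
    · intro h; rw [h])

/-- The partitions of `n`, realized as compositions of `n` with weakly decreasing parts. -/
abbrev PartitionList (n : ℕ) := {c : Composition n // c.blocks.Pairwise (· ≥ ·)}

open Finset

theorem Finset.card_filter_lt_eq_sum {α : Type*} (s : Finset α) (g : α → ℕ) (k : ℕ) :
    #{x ∈ s | g x < k} = ∑ v ∈ range k, #{x ∈ s | g x = v} := by
  rw [card_eq_sum_card_fiberwise (f := g) (t := range k) fun x hx => by
    simpa using (mem_filter.mp hx).2]
  refine sum_congr rfl fun v hv => ?_
  rw [filter_filter]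
  refine congrArg card (filter_congr fun x _ => ?_)
  have := mem_range.mp hv
  constructor
  · exact And.right
  · rintro rfl; exact ⟨this, rfl⟩

theorem Finset.eqOn_of_le_of_card_filter_lt_le {α : Type*} {s : Finset α} {f g : α → ℕ}
    (hfg : ∀ x ∈ s, f x ≤ g x) (hcard : ∀ k, #{x ∈ s | f x < k} ≤ #{x ∈ s | g x < k}) :
    ∀ x ∈ s, f x = g x := by
  intro x hx
  have hsub : {y ∈ s | g y < f x + 1} ⊆ {y ∈ s | f y < f x + 1} :=
    monotone_filter_right s fun y hy => lt_of_le_of_lt (hfg y hy)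
  have heq := eq_of_subset_of_card_le hsub (hcard _)
  have hmem : x ∈ {y ∈ s | g y < f x + 1} := heq ▸ mem_filter.mpr ⟨hx, Nat.lt_succ_self _⟩
  exact le_antisymm (hfg x hx) (Nat.lt_succ_iff.mp (mem_filter.mp hmem).2)

theorem List.antitone_getD_of_pairwise_ge {l : List ℕ} (hl : l.Pairwise (· ≥ ·)) :
    Antitone fun i => l.getD i 0 := by
  intro i i' h
  change l.getD i' 0 ≤ l.getD i 0
  by_cases hi' : i' < l.length
  · rw [List.getD_eq_getElem l 0 hi', List.getD_eq_getElem l 0 (lt_of_le_of_lt h hi')]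
    rcases eq_or_lt_of_le h with rfl | hlt
    · exact le_rfl
    · exact List.pairwise_iff_getElem.mp hl i i' _ hi' hlt
  · simp only [List.getD_eq_default l 0 (le_of_not_gt hi'), zero_le]

theorem List.not_lex_lt_of_sum_range_getD_le {l μ : List ℕ} (hμ : ∀ x ∈ μ, 0 < x)
    (hdom : ∀ k, ∑ v ∈ Finset.range k, μ.getD v 0 ≤ ∑ i ∈ Finset.range k, l.getD i 0) :
    ¬ List.Lex (· < ·) l μ := by
  intro hlex
  induction hlex with
  | @nil b bs =>
    have := hdom 1
    simp only [Finset.sum_range_one, List.getD_cons_zero, List.getD_nil] at this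
    exact (hμ b List.mem_cons_self).ne' (Nat.le_zero.mp this)
  | @rel a b as bs h =>
    have := hdom 1
    simp only [Finset.sum_range_one, List.getD_cons_zero] at this
    omega
  | @cons a as bs _ ih =>
    refine ih (fun x hx => hμ x (List.mem_cons_of_mem a hx)) fun k => ?_
    have := hdom (k + 1)
    simpa only [Finset.sum_range_succ', List.getD_cons_succ, List.getD_cons_zero, add_le_add_iff_right]
      using this

theorem Matrix.BlockTriangular.isUnit_of_injective {ι α R : Type*} [Fintype ι] [DecidableEq ι]
    [LinearOrder α] [CommRing R] {M : Matrix ι ι R} {b : ι → α} (hM : M.BlockTriangular b)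
    (hb : Function.Injective b) (hdiag : ∀ i, IsUnit (M i i)) : IsUnit M := by
  let _ : LinearOrder ι := LinearOrder.lift' b hb
  rw [Matrix.isUnit_iff_isUnit_det, Matrix.det_of_isUpperTriangular hM]
  exact IsUnit.prod_univ_iff.mpr hdiag

section Tableau

variable {l : List ℕ}

theorem mem_cellsOf {c : ℕ × ℕ} : c ∈ cellsOf l ↔ c.2 < l.getD c.1 0 := by
  obtain ⟨i, j⟩ := c
  simp only [cellsOf, mem_biUnion, mem_range, mem_image, Prod.mk.injEq]
  constructor
  · rintro ⟨i, -, j, hj, rfl, rfl⟩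
    exact hj
  · intro hj
    refine ⟨i, ?_, j, hj, rfl, rfl⟩
    by_contra hi
    rw [List.getD_eq_default l 0 (not_lt.mp hi)] at hj
    exact Nat.not_lt_zero j hj

theorem card_filter_fst_eq_getD (l : List ℕ) (i : ℕ) :
    #{c ∈ cellsOf l | c.1 = i} = l.getD i 0 := by
  have : {c ∈ cellsOf l | c.1 = i} = (range (l.getD i 0)).map ⟨(i, ·), Prod.mk_right_injective i⟩ := by
    ext ⟨a, b⟩
    simp only [mem_filter, mem_cellsOf, mem_map, mem_range, Function.Embedding.coeFn_mk,
      Prod.mk.injEq]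
    constructor
    · rintro ⟨hb, rfl⟩
      exact ⟨b, hb, rfl, rfl⟩
    · rintro ⟨b, hb, rfl, rfl⟩
      exact ⟨hb, rfl⟩
  rw [this, card_map, card_range]

theorem card_filter_fst_lt (l : List ℕ) (k : ℕ) :
    #{c ∈ cellsOf l | c.1 < k} = ∑ i ∈ range k, l.getD i 0 := by
  simp only [card_filter_lt_eq_sum, card_filter_fst_eq_getD]

namespace SSYT

theorem entry_injective : Function.Injective (SSYT.entry (l := l)) := by
  rintro ⟨⟩ ⟨⟩ rfl
  rfl

theorem row_lt_entry (hl : l.Pairwise (· ≥ ·)) (T : SSYT l) :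
    ∀ i j, j < l.getD i 0 → i < T.entry i j
  | 0, j, hj => T.pos 0 j hj
  | i + 1, j, hj =>
    have hj' : j < l.getD i 0 := hj.trans_le (List.antitone_getD_of_pairwise_ge hl i.le_succ)
    Nat.lt_of_le_of_lt (row_lt_entry hl T i j hj') (T.colStrict i (i + 1) j i.lt_succ_self hj)

theorem sum_wtOf_eq_card (T : SSYT l) (k : ℕ) :
    ∑ v ∈ range k, wtOf T (v + 1) = #{c ∈ cellsOf l | T.entry c.1 c.2 - 1 < k} := by
  rw [card_filter_lt_eq_sum]
  refine sum_congr rfl fun v _ => congrArg card (filter_congr fun c hc => ?_)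
  have := T.pos c.1 c.2 (mem_cellsOf.mp hc)
  omega

theorem sum_wtOf_le (hl : l.Pairwise (· ≥ ·)) (T : SSYT l) (k : ℕ) :
    ∑ v ∈ range k, wtOf T (v + 1) ≤ ∑ i ∈ range k, l.getD i 0 := by
  rw [sum_wtOf_eq_card, ← card_filter_fst_lt]
  refine card_le_card (monotone_filter_right _ fun c hc hlt => ?_)
  have := row_lt_entry hl T c.1 c.2 (mem_cellsOf.mp hc)
  omega

end SSYT

@[simps]
def superstandard (l : List ℕ) : SSYT l where
  entry i j := if j < l.getD i 0 then i + 1 else 0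
  pos i j h := by rw [if_pos h]; omega
  zeros i j h := by rw [if_neg h]
  rowWeak i j1 j2 h12 h2 := by rw [if_pos (h12.trans_lt h2), if_pos h2]
  colStrict i1 i2 j h12 h2 := by rw [if_pos h2]; split <;> omega

theorem wtOf_superstandard (i : ℕ) : wtOf (superstandard l) (i + 1) = l.getD i 0 := by
  rw [wtOf, ← card_filter_fst_eq_getD l i]
  refine congrArg card (filter_congr fun c hc => ?_)
  simp only [superstandard_entry, if_pos (mem_cellsOf.mp hc), add_left_inj]

theorem isQYT_superstandard (hl : l.Pairwise (· ≥ ·)) : IsQYT (superstandard l) := by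
  rintro k hk ⟨c, hc, hck⟩
  have hcell := mem_cellsOf.mp hc
  simp only [superstandard_entry, if_pos hcell] at hck
  have hrow : 0 < l.getD (k - 2) 0 :=
    (Nat.zero_le _).trans_lt (hcell.trans_le (List.antitone_getD_of_pairwise_ge hl (by omega)))
  refine ⟨c, hc, (k - 2, 0), mem_cellsOf.mpr hrow, ?_, ?_, by omega⟩
  · simp only [superstandard_entry, if_pos hcell, hck]
  · simp only [superstandard_entry, if_pos hrow]
    omega

theorem eq_superstandard_of_wtOf_eq (hl : l.Pairwise (· ≥ ·)) (T : SSYT l)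
    (hw : ∀ i, wtOf T (i + 1) = l.getD i 0) : T = superstandard l := by
  have hrow : ∀ c ∈ cellsOf l, c.1 = T.entry c.1 c.2 - 1 := by
    refine eqOn_of_le_of_card_filter_lt_le (fun c hc => ?_) fun k => ?_
    · have := T.row_lt_entry hl c.1 c.2 (mem_cellsOf.mp hc)
      omega
    · rw [← T.sum_wtOf_eq_card, card_filter_fst_lt]
      exact (sum_congr rfl fun i _ => hw i).ge
  refine SSYT.entry_injective (funext₂ fun i j => ?_)
  by_cases hj : j < l.getD i 0
  · have hij : i = T.entry i j - 1 := hrow (i, j) (mem_cellsOf.mpr hj)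
    have := T.pos i j hj
    simp only [superstandard_entry, if_pos hj]
    omega
  · rw [T.zeros i j hj, superstandard_entry, if_neg hj]

theorem QK_self (hl : l.Pairwise (· ≥ ·)) : QK l l = 1 := by
  rw [QK, Set.ncard_eq_one]
  refine ⟨superstandard l, Set.eq_singleton_iff_unique_mem.mpr ⟨?_, ?_⟩⟩
  · exact ⟨isQYT_superstandard hl, wtOf_superstandard⟩
  · exact fun T hT => eq_superstandard_of_wtOf_eq hl T hT.2

theorem QK_eq_zero_of_lex {μ : List ℕ} (hl : l.Pairwise (· ≥ ·)) (hμ : ∀ x ∈ μ, 0 < x)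
    (hlex : List.Lex (· < ·) l μ) : QK l μ = 0 := by
  rw [QK]
  convert Set.ncard_empty (SSYT l)
  refine Set.eq_empty_iff_forall_notMem.mpr ?_
  rintro T ⟨-, hw⟩
  refine List.not_lex_lt_of_sum_range_getD_le hμ (fun k => ?_) hlex
  simpa only [hw] using T.sum_wtOf_le hl k

end Tableau

theorem quasiKostka_unitriangular_general (n : ℕ)
    (Q : Matrix (PartitionList n) (PartitionList n) ℤ)
    (hQ : ∀ p q : PartitionList n, Q p q = QK p.1.blocks q.1.blocks) :
    (∀ p : PartitionList n, Q p p = 1) ∧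
    (∀ p q : PartitionList n, List.Lex (· < ·) p.1.blocks q.1.blocks → Q p q = 0) ∧
    (∃ B : Matrix (PartitionList n) (PartitionList n) ℤ, Q * B = 1 ∧ B * Q = 1) := by
  have hdiag : ∀ p : PartitionList n, Q p p = 1 := fun p => by
    rw [hQ, QK_self p.2, Nat.cast_one]
  have hzero : ∀ p q : PartitionList n, List.Lex (· < ·) p.1.blocks q.1.blocks → Q p q = 0 :=
    fun p q hlex => by rw [hQ, QK_eq_zero_of_lex p.2 (fun _ => q.1.blocks_pos) hlex, Nat.cast_zero]
  refine ⟨hdiag, hzero, isUnit_iff_exists.mp ?_⟩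
  -- Partitions listed largest first: `Q` is upper triangular for the reversed lexicographic order.
  refine Matrix.BlockTriangular.isUnit_of_injective (b := fun p => OrderDual.toDual p.1.blocks)
    (fun p q hlt => hzero p q hlt) (fun p q h => Subtype.ext (Composition.ext h)) fun p => ?_
  rw [hdiag]
  exact isUnit_one

/-- The quasi-Kostka matrix Q(n), whose rows and columns are indexed by
the partitions of n listed in reverse lexicographic order (largest first) and whose
(λ,μ)-entry is QK_{λ,μ}, is upper unitriangular: its diagonal entries are all 1 and its
entries strictly below the diagonal (i.e. those whose row partition is lexicographically
smaller than the column partition) are all 0.  Consequently Q(n) is invertible and its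
inverse has integer entries. -/
theorem quasiKostka_unitriangular (n : ℕ) (hn : 0 < n)
    (Q : Matrix (PartitionList n) (PartitionList n) ℤ)
    (hQ : ∀ p q : PartitionList n, Q p q = QK p.1.blocks q.1.blocks) :
    (∀ p : PartitionList n, Q p p = 1) ∧
    (∀ p q : PartitionList n, List.Lex (· < ·) p.1.blocks q.1.blocks → Q p q = 0) ∧
    (∃ B : Matrix (PartitionList n) (PartitionList n) ℤ, Q * B = 1 ∧ B * Q = 1) :=
  quasiKostka_unitriangular_general n Q hQ
end

section
/- Let w, h ≥ 1 and let λ = (λ1, λ2) with λ1 ≥ λ2 ≥ 0 and λ1 + λ2 = wh. In the (unique) Schur expansion s_w[s_h](x,y) = Σ_{(λ1,λ2) ⊢ wh} a^{(λ1,λ2)} s_{(λ1,λ2)}(x,y) over two-row partitions of wh, the coefficient a^{(λ1,λ2)} equals (the number of partitions of λ2 with all parts ≤ w and at most h parts) minus (the number of partitions of λ2 − 1 with all parts ≤ w and at most h parts), where the number of partitions of −1 is 0. -/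
open MvPolynomial in
/-- The two-variable Schur polynomial `s_{(a,b)}(x,y)` for a partition `(a,b)` with
`a ≥ b ≥ 0`:  `s_{(a,b)}(x,y) = (xy)^b (x^{a-b+1} - y^{a-b+1})/(x-y)
= Σ_{i=0}^{a-b} x^{a-i} y^{b+i}`, the weight generating function of semistandard Young
tableaux of shape `(a,b)` with entries in `{1,2}` (`x = X 0`, `y = X 1`). -/
noncomputable def schur2 (a b : ℕ) : MvPolynomial (Fin 2) ℤ :=
  ∑ i ∈ Finset.range (a - b + 1), X 0 ^ (a - i) * X 1 ^ (b + i)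

open MvPolynomial in
/-- The plethysm `s_w[s_h](x,y)`: the complete homogeneous symmetric polynomial of degree
`w` evaluated at the `h+1` monomials `x^h, x^{h-1}y, …, y^h` of `s_{(h)}(x,y)`,
i.e. the sum over all multisets of size `w` of these monomials (coded by weakly
increasing functions `f : Fin w → Fin (h+1)`) of their products. -/
noncomputable def pleth2 (w h : ℕ) : MvPolynomial (Fin 2) ℤ :=
  ∑ f ∈ Finset.univ.filter (fun f : Fin w → Fin (h + 1) =>
      ∀ i j : Fin w, i ≤ j → f i ≤ f j),
    ∏ j : Fin w, (X 0 ^ (h - (f j : ℕ)) * X 1 ^ ((f j : ℕ)))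

/-- The number of partitions of `k` whose parts are at most `w`, with at most `h`
parts. -/
noncomputable def countBoxed (w h k : ℕ) : ℕ :=
  Set.ncard {l : List ℕ |
    l.Pairwise (· ≥ ·) ∧ (∀ x ∈ l, 0 < x ∧ x ≤ w) ∧ l.length ≤ h ∧ l.sum = k}

/-!
Expanding the product, `s_w[s_h](x,y) = ∑_S p_S x^{wh-S} y^S`, where `p_S` counts the partitions
of `S` fitting in a `w × h` box. Conjugating the partition shows that `p_S` is the number `c_S`
of partitions of `S` with parts `≤ w` and at most `h` parts, and complementing it inside the box
shows `p_S = p_{wh-S}`. As `s_{(wh-b,b)}` is the sum of the monomials `x^{wh-S} y^S` with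
`b ≤ S ≤ wh - b`, the proposed coefficients `c_b - c_{b-1}` telescope to
`c_{min(S, wh-S)} = p_S` in front of `x^{wh-S} y^S`.
-/

open Finset

/-- An antitone `f : Fin a → Fin (b + 1)` encodes the partition `f 0 ≥ f 1 ≥ ⋯ ≥ f (a-1)`
of `∑ i, f i` (zeros allowed) with at most `a` parts, each at most `b`. -/
noncomputable def boxPartitions (a b S : ℕ) : Finset (Fin a → Fin (b + 1)) :=
  open scoped Classical in {f | Antitone f ∧ ∑ i, (f i : ℕ) = S}

section BoxPartitions

variable {a b : ℕ}

theorem mem_boxPartitions {S : ℕ} {f : Fin a → Fin (b + 1)} :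
    f ∈ boxPartitions a b S ↔ Antitone f ∧ ∑ i, (f i : ℕ) = S := by
  simp [boxPartitions]

theorem comp_rev_mem_boxPartitions {S : ℕ} {f : Fin a → Fin (b + 1)} :
    f ∘ Fin.rev ∈ boxPartitions a b S ↔ Monotone f ∧ ∑ i, (f i : ℕ) = S := by
  have hsum : ∑ i, (f (Fin.rev i) : ℕ) = ∑ i, (f i : ℕ) :=
    Fintype.sum_equiv Fin.revPerm _ _ fun _ => rfl
  rw [mem_boxPartitions, Function.comp_def, hsum]
  refine and_congr_left' ⟨fun hf => ?_, fun hf => hf.comp_antitone Fin.rev_anti⟩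
  simpa [Function.comp_def] using hf.comp Fin.rev_anti

theorem sum_sub_val_add_sum_val (f : Fin a → Fin (b + 1)) :
    ∑ i, (b - (f i : ℕ)) + ∑ i, (f i : ℕ) = a * b := by
  rw [← sum_add_distrib]
  calc ∑ i, (b - (f i : ℕ) + f i) = ∑ _i : Fin a, b :=
        sum_congr rfl fun i _ => Nat.sub_add_cancel (Fin.is_le _)
    _ = a * b := by simp

def conjPartition (f : Fin a → Fin (b + 1)) : Fin b → Fin (a + 1) :=
  fun i => ⟨#{j | (i : ℕ) < f j},
    Nat.lt_succ_of_le <| (card_filter_le _ _).trans_eq (by simp)⟩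

theorem conjPartition_antitone (f : Fin a → Fin (b + 1)) : Antitone (conjPartition f) :=
  fun _ _ hii' => Fin.mk_le_mk.mpr <| card_le_card <| monotone_filter_right _
    fun _ _ => lt_of_le_of_lt (Fin.le_def.mp hii')

/-- For antitone `f`, the set `{j | i < f j}` is an initial segment of `Fin a`. -/
theorem lt_conjPartition_iff {f : Fin a → Fin (b + 1)} (hf : Antitone f) (i : Fin b)
    (j : Fin a) : (j : ℕ) < conjPartition f i ↔ (i : ℕ) < f j := by
  change (j : ℕ) < #{j' | (i : ℕ) < f j'} ↔ _
  constructor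
  · intro hj
    by_contra! hfj
    have hsub : ({j' | (i : ℕ) < f j'} : Finset _) ⊆ Iio j := fun j' hj' =>
      mem_Iio.mpr <| lt_of_not_ge fun hjj' => by
        have := Fin.le_def.mp (hf hjj')
        simp only [mem_filter, mem_univ, true_and] at hj'
        omega
    have := (card_le_card hsub).trans_eq (Fin.card_Iio j)
    omega
  · intro hfj
    have hsub : Iic j ⊆ ({j' | (i : ℕ) < f j'} : Finset _) := fun j' hj' => by
      simp only [mem_filter, mem_univ, true_and]
      exact lt_of_lt_of_le hfj (Fin.le_def.mp (hf (mem_Iic.mp hj')))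
    have := (Fin.card_Iic j).symm.trans_le (card_le_card hsub)
    omega

theorem conjPartition_conjPartition {f : Fin a → Fin (b + 1)} (hf : Antitone f) :
    conjPartition (conjPartition f) = f := by
  funext j
  ext
  change #{i | (j : ℕ) < conjPartition f i} = f j
  simp_rw [lt_conjPartition_iff hf]
  rw [Fin.card_filter_val_lt]
  exact min_eq_right (Fin.is_le _)

theorem sum_conjPartition (f : Fin a → Fin (b + 1)) :
    ∑ i, (conjPartition f i : ℕ) = ∑ j, (f j : ℕ) := by
  calc ∑ i, (conjPartition f i : ℕ) = ∑ i : Fin b, ∑ j, if (i : ℕ) < f j then 1 else 0 :=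
        sum_congr rfl fun i _ => card_filter (fun j => (i : ℕ) < f j) univ
    _ = ∑ j, #{i : Fin b | (i : ℕ) < f j} := by
        rw [sum_comm]; exact sum_congr rfl fun j _ => (card_filter _ _).symm
    _ = ∑ j, (f j : ℕ) := sum_congr rfl fun j _ => by
        rw [Fin.card_filter_val_lt]; exact min_eq_right (Fin.is_le _)

theorem card_boxPartitions_comm (S : ℕ) :
    #(boxPartitions a b S) = #(boxPartitions b a S) := by
  refine card_nbij' conjPartition conjPartition ?_ ?_
    (fun f hf => conjPartition_conjPartition (mem_boxPartitions.mp hf).1)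
    (fun f hf => conjPartition_conjPartition (mem_boxPartitions.mp hf).1) <;>
  · intro f hf
    rw [mem_coe, mem_boxPartitions] at hf ⊢
    exact ⟨conjPartition_antitone f, (sum_conjPartition f).trans hf.2⟩

def complPartition (f : Fin a → Fin (b + 1)) : Fin a → Fin (b + 1) :=
  Fin.rev ∘ f ∘ Fin.rev

theorem complPartition_complPartition (f : Fin a → Fin (b + 1)) :
    complPartition (complPartition f) = f := by
  funext i; simp [complPartition]

theorem complPartition_mem_boxPartitions {S : ℕ} {f : Fin a → Fin (b + 1)}
    (hf : f ∈ boxPartitions a b S) : complPartition f ∈ boxPartitions a b (a * b - S) := by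
  rw [mem_boxPartitions] at hf ⊢
  refine ⟨Fin.rev_anti.comp_monotone (hf.1.comp Fin.rev_anti), ?_⟩
  have hsum : ∑ i, (complPartition f i : ℕ) = ∑ i, (b - (f i : ℕ)) :=
    Fintype.sum_equiv Fin.revPerm _ _ fun i => by simp [complPartition, Fin.val_rev]
  have := sum_sub_val_add_sum_val f
  omega

theorem card_boxPartitions_sub {S : ℕ} (hS : S ≤ a * b) :
    #(boxPartitions a b (a * b - S)) = #(boxPartitions a b S) := by
  refine card_nbij' complPartition complPartition (fun f hf => ?_) (fun f hf => ?_)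
    (fun f _ => complPartition_complPartition f) (fun f _ => complPartition_complPartition f)
  · simpa [Nat.sub_sub_self hS] using complPartition_mem_boxPartitions hf
  · exact complPartition_mem_boxPartitions hf

end BoxPartitions

theorem List.filter_pos_append_replicate {L : List ℕ} (hL : L.Pairwise (· ≥ ·)) :
    L.filter (0 < ·) ++ List.replicate (L.length - (L.filter (0 < ·)).length) 0 = L := by
  induction L with
  | nil => rfl
  | cons x L ih =>
    rw [List.pairwise_cons] at hL
    rcases Nat.eq_zero_or_pos x with rfl | hx
    · have hzero : ∀ y ∈ L, y = 0 := fun y hy => Nat.le_zero.mp (hL.1 y hy)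
      have hnil : L.filter (0 < ·) = [] :=
        List.filter_eq_nil_iff.mpr fun y hy => by simp [hzero y hy]
      simp [hnil, ← List.eq_replicate_of_mem hzero, List.replicate_succ]
    · simpa [List.filter_cons_of_pos, hx] using ih hL.2

theorem List.ofFn_getD {α : Type*} {l : List α} {n : ℕ} (hl : l.length = n) (d : α) :
    List.ofFn (fun i : Fin n => l.getD i d) = l := by
  subst hl
  exact List.ext_getElem (by simp) fun i _ _ => by simp

def IsBoxedPartition (w h k : ℕ) (l : List ℕ) : Prop :=
  l.Pairwise (· ≥ ·) ∧ (∀ x ∈ l, 0 < x ∧ x ≤ w) ∧ l.length ≤ h ∧ l.sum = k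

section PartitionLists

variable {h w : ℕ}

def nonzeroParts (f : Fin h → Fin (w + 1)) : List ℕ :=
  (List.ofFn fun i => (f i : ℕ)).filter (0 < ·)

theorem pairwise_ofFn_val_of_antitone {f : Fin h → Fin (w + 1)} (hf : Antitone f) :
    (List.ofFn fun i => (f i : ℕ)).Pairwise (· ≥ ·) :=
  List.pairwise_ofFn.mpr fun _ _ hij => hf hij.le

theorem nonzeroParts_append_replicate {f : Fin h → Fin (w + 1)} (hf : Antitone f) :
    nonzeroParts f ++ List.replicate (h - (nonzeroParts f).length) 0 =
      List.ofFn fun i => (f i : ℕ) := by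
  simpa only [nonzeroParts, List.length_ofFn] using
    List.filter_pos_append_replicate (pairwise_ofFn_val_of_antitone hf)

theorem nonzeroParts_injOn : Set.InjOn (nonzeroParts (h := h) (w := w)) {f | Antitone f} :=
  fun f hf g hg hfg => by
    have := (nonzeroParts_append_replicate hf).symm.trans
      (hfg ▸ nonzeroParts_append_replicate hg)
    funext i
    exact Fin.ext (congrFun (List.ofFn_injective this) i)

theorem isBoxedPartition_nonzeroParts {k : ℕ} {f : Fin h → Fin (w + 1)}
    (hf : f ∈ boxPartitions h w k) : IsBoxedPartition w h k (nonzeroParts f) := by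
  rw [mem_boxPartitions] at hf
  refine ⟨(pairwise_ofFn_val_of_antitone hf.1).filter _, fun x hx => ?_, ?_, ?_⟩
  · obtain ⟨hx, hpos⟩ := List.mem_filter.mp hx
    obtain ⟨i, rfl⟩ := List.mem_ofFn.mp hx
    exact ⟨by simpa using hpos, Fin.is_le _⟩
  · exact (List.length_filter_le _ _).trans_eq List.length_ofFn
  · have := congrArg List.sum (nonzeroParts_append_replicate hf.1)
    simp only [List.sum_append, List.sum_replicate, smul_zero, add_zero, List.sum_ofFn] at this
    rw [this, hf.2]

theorem exists_nonzeroParts_eq {k : ℕ} {l : List ℕ} (hl : IsBoxedPartition w h k l) :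
    ∃ f ∈ boxPartitions h w k, nonzeroParts f = l := by
  obtain ⟨hsorted, hbound, hlen, hsum⟩ := hl
  set L := l ++ List.replicate (h - l.length) 0
  have hLlen : L.length = h := by simp [L]; omega
  have hLsorted : L.Pairwise (· ≥ ·) := List.pairwise_append.mpr
    ⟨hsorted, List.pairwise_replicate.mpr (Or.inr le_rfl),
      fun _ _ _ hy => (List.eq_of_mem_replicate hy).symm ▸ Nat.zero_le _⟩
  have hLbound : ∀ n, L.getD n 0 ≤ w := fun n => by
    rcases lt_or_ge n L.length with hn | hn
    · rw [List.getD_eq_getElem _ _ hn]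
      rcases List.mem_append.mp (List.getElem_mem hn) with hx | hx
      · exact (hbound _ hx).2
      · simp [List.eq_of_mem_replicate hx]
    · rw [List.getD_eq_default _ _ hn]; exact Nat.zero_le _
  let f : Fin h → Fin (w + 1) := fun i => ⟨L.getD i 0, Nat.lt_succ_of_le (hLbound i)⟩
  have hfL : (List.ofFn fun i => (f i : ℕ)) = L := List.ofFn_getD hLlen 0
  have hfsorted : (List.ofFn fun i => (f i : ℕ)).Pairwise (· ≥ ·) := hfL ▸ hLsorted
  have hf : Antitone f := antitone_iff_forall_lt.mpr fun i j hij =>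
    Fin.le_def.mpr (List.pairwise_ofFn.mp hfsorted hij)
  refine ⟨f, mem_boxPartitions.mpr ⟨hf, ?_⟩, ?_⟩
  · rw [← List.sum_ofFn, hfL]; simp [L, hsum]
  · rw [nonzeroParts, hfL, List.filter_append,
      List.filter_eq_self.mpr (by simpa using fun x hx => (hbound x hx).1),
      List.filter_eq_nil_iff.mpr (by simp +contextual [List.mem_replicate]), List.append_nil]

end PartitionLists

theorem countBoxed_eq_card (w h k : ℕ) : countBoxed w h k = #(boxPartitions h w k) := by
  have himage : nonzeroParts '' (boxPartitions h w k : Set (Fin h → Fin (w + 1))) =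
      {l | IsBoxedPartition w h k l} := by
    ext l
    constructor
    · rintro ⟨f, hf, rfl⟩
      exact isBoxedPartition_nonzeroParts hf
    · intro hl
      obtain ⟨f, hf, rfl⟩ := exists_nonzeroParts_eq hl
      exact ⟨f, hf, rfl⟩
  change {l | IsBoxedPartition w h k l}.ncard = _
  rw [← himage,
    (nonzeroParts_injOn.mono fun f hf => (mem_boxPartitions.mp hf).1).ncard_image,
    Set.ncard_coe_finset]

section Polynomials

open MvPolynomial

theorem prod_pow_sub_mul_pow {M : Type*} [CommMonoid M] (x y : M) {w h : ℕ}
    (f : Fin w → Fin (h + 1)) :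
    ∏ j, (x ^ (h - (f j : ℕ)) * y ^ (f j : ℕ)) =
      x ^ (w * h - ∑ j, (f j : ℕ)) * y ^ ∑ j, (f j : ℕ) := by
  rw [prod_mul_distrib, prod_pow_eq_pow_sum, prod_pow_eq_pow_sum, ← sum_sub_val_add_sum_val f,
    Nat.add_sub_cancel]

theorem pleth2_eq_sum_card (w h : ℕ) :
    pleth2 w h = ∑ S ∈ range (w * h + 1),
      (#(boxPartitions w h S) : ℤ) • (X 0 ^ (w * h - S) * X 1 ^ S) := by
  rw [pleth2, sum_congr rfl fun f _ => prod_pow_sub_mul_pow _ _ f,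
    ← sum_fiberwise_of_maps_to (t := range (w * h + 1)) (g := fun f => ∑ j, (f j : ℕ))
      fun f _ => mem_range.mpr <| Nat.lt_succ_of_le <|
        sum_sub_val_add_sum_val f ▸ Nat.le_add_left _ _]
  refine sum_congr rfl fun S _ => ?_
  rw [sum_congr rfl fun f hf => by rw [(mem_filter.mp hf).2], sum_const, natCast_zsmul]
  congr 1
  -- reading the increasing code of a multiset backwards gives a partition
  refine card_nbij' (· ∘ Fin.rev) (· ∘ Fin.rev) (fun f hf => ?_) (fun f hf => ?_)
    (fun f _ => by simp [Function.comp_def]) (fun f _ => by simp [Function.comp_def])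
  · simp only [mem_coe, mem_filter, mem_univ, true_and] at hf
    exact comp_rev_mem_boxPartitions.mpr ⟨fun i j => hf.1 i j, hf.2⟩
  · have := (comp_rev_mem_boxPartitions (f := f ∘ Fin.rev)).mp
      (by simpa [Function.comp_def] using hf)
    simp only [mem_coe, mem_filter, mem_univ, true_and]
    exact ⟨fun i j => @this.1 i j, this.2⟩

theorem schur2_sub_eq_sum_ite {n b : ℕ} (hb : 2 * b ≤ n) :
    schur2 (n - b) b =
      ∑ S ∈ range (n + 1), if b ≤ S ∧ S ≤ n - b then X 0 ^ (n - S) * X 1 ^ S else 0 := by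
  have hfilter : {S ∈ range (n + 1) | b ≤ S ∧ S ≤ n - b} = Ico b (n - b + 1) := by
    ext S; simp only [mem_filter, mem_range, mem_Ico]; omega
  rw [← sum_filter, hfilter, sum_Ico_eq_sum_range, schur2, Nat.sub_add_comm (by omega)]
  simp only [Nat.sub_sub]

theorem sum_sub_smul_schur2 (c : ℕ → ℤ) (n : ℕ) :
    ∑ b ∈ range (n / 2 + 1), (c b - if b = 0 then 0 else c (b - 1)) • schur2 (n - b) b =
      ∑ S ∈ range (n + 1), c (min S (n - S)) • (X 0 ^ (n - S) * X 1 ^ S) := by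
  have htelescope : ∀ m, ∑ b ∈ range (m + 1), (c b - if b = 0 then 0 else c (b - 1)) = c m :=
    fun m => by induction m with
      | zero => simp
      | succ m ih => rw [sum_range_succ, ih]; simp
  calc _ = ∑ b ∈ range (n / 2 + 1), ∑ S ∈ range (n + 1),
        (if b ≤ S ∧ S ≤ n - b then c b - (if b = 0 then 0 else c (b - 1)) else 0) •
          (X 0 ^ (n - S) * X 1 ^ S : MvPolynomial (Fin 2) ℤ) := sum_congr rfl fun b hb => by
        rw [schur2_sub_eq_sum_ite (by have := mem_range.mp hb; omega), smul_sum]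
        exact sum_congr rfl fun S _ => by
          rw [smul_ite, smul_zero]; split_ifs <;> simp only [zero_smul]
    _ = _ := by
        rw [sum_comm]
        refine sum_congr rfl fun S hS => ?_
        rw [← Finset.sum_smul, ← sum_filter]
        have hfilter : {b ∈ range (n / 2 + 1) | b ≤ S ∧ S ≤ n - b} =
            range (min S (n - S) + 1) := by
          ext b; simp only [mem_filter, mem_range] at hS ⊢; omega
        rw [hfilter, htelescope]

end Polynomials

theorem plethysm_two_variable_coeff_general (w h : ℕ) :
    pleth2 w h =
      ∑ b ∈ Finset.range (w * h / 2 + 1),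
        ((countBoxed w h b : ℤ) -
            (if b = 0 then 0 else (countBoxed w h (b - 1) : ℤ))) •
          schur2 (w * h - b) b := by
  rw [pleth2_eq_sum_card, sum_sub_smul_schur2]
  refine sum_congr rfl fun S hS => ?_
  rw [countBoxed_eq_card, card_boxPartitions_comm (a := h) (b := w)]
  rcases le_total S (w * h - S) with hle | hle
  · rw [min_eq_left hle]
  · rw [min_eq_right hle, card_boxPartitions_sub (Nat.lt_succ_iff.mp (mem_range.mp hS))]

/-- In the Schur expansion of the two-variable plethysm
s_w[s_h](x,y) = Σ_{(λ₁,λ₂) ⊢ wh} a^{(λ₁,λ₂)} s_{(λ₁,λ₂)}(x,y), the coefficient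
a^{(λ₁,λ₂)} equals (the number of partitions of λ₂ with parts ≤ w and at most h parts)
minus (the number of partitions of λ₂ − 1 with parts ≤ w and at most h parts), the number
of partitions of −1 being 0. -/
theorem plethysm_two_variable_coeff (w h : ℕ) (hw : 1 ≤ w) (hh : 1 ≤ h) :
    pleth2 w h =
      ∑ b ∈ Finset.range (w * h / 2 + 1),
        ((countBoxed w h b : ℤ) -
            (if b = 0 then 0 else (countBoxed w h (b - 1) : ℤ))) •
          schur2 (w * h - b) b :=
  plethysm_two_variable_coeff_general w h
end

section
/- For every h ≥ 1 there exists a symmetric chain decomposition of L(3,h) that satisfies the pattern condition and restricts to a symmetric chain decomposition of L(3,h−1). -/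
/-- `b` covers `a` in Young's lattice: `a ⊆ b` (componentwise, viewing partitions as
lists of parts padded by zeros) and `b` has exactly one more box than `a`. -/
def CoversBox (a b : List ℕ) : Prop :=
  (∀ i, a.getD i 0 ≤ b.getD i 0) ∧ b.sum = a.sum + 1

/-- The partitions lying in a `w × h` box: largest part at most `w`, at most `h`
parts. -/
def boxSet (w h : ℕ) : Set (List ℕ) :=
  {l | l.Pairwise (· ≥ ·) ∧ (∀ x ∈ l, 0 < x ∧ x ≤ w) ∧ l.length ≤ h}

/-- `C` is a symmetric chain decomposition of the subset `S` of the partitions in a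
`w × h` box: the members of `C` are nonempty saturated chains (recorded as lists,
increasing, consecutive elements differing by adding a single box) of elements of `S`,
the ranks of the minimal and maximal element of each chain sum to `w*h`, and every
element of `S` lies in exactly one chain of `C`. -/
structure IsSCDOn (w h : ℕ) (S : Set (List ℕ)) (C : Set (List (List ℕ))) : Prop where
  nonempty : ∀ c ∈ C, c ≠ []
  subset : ∀ c ∈ C, ∀ l ∈ c, l ∈ S
  saturated : ∀ c ∈ C, c.Chain' CoversBox
  symm : ∀ c ∈ C, c.headI.sum + (c.getLastD []).sum = w * h
  partitioned : ∀ l ∈ S, ∃! c, c ∈ C ∧ l ∈ c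

/-- A symmetric chain decomposition of `L(w,h)`, the poset of all partitions in a
`w × h` box. -/
def IsSCD (w h : ℕ) (C : Set (List (List ℕ))) : Prop :=
  IsSCDOn w h (boxSet w h) C

/-- The number of parts of `l` that are `≥ j`, i.e. the `j`-th column of the conjugate
partition (columns indexed starting at `1`). -/
def conjCount (l : List ℕ) (j : ℕ) : ℕ := l.countP (fun x => decide (j ≤ x))

/-- The `t`-th edge of the chain `c` (from its `t`-th to its `(t+1)`-st element) is
labelled `j`: the box added lies in column `j`. -/
def EdgeLabelAt (c : List (List ℕ)) (t j : ℕ) : Prop :=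
  conjCount (c.getD (t + 1) []) j = conjCount (c.getD t []) j + 1

/-- A chain is described by a pattern: its sequence of edge labels is an initial segment
containing no label equal to `1`, followed by some number of repetitions of a fixed
length-`w` sequence which is a permutation of `(1, 2, …, w)`. -/
def PatternChain (w : ℕ) (c : List (List ℕ)) : Prop :=
  ∃ labels : List ℕ,
    labels.length + 1 = c.length ∧
    (∀ t, t + 1 < c.length → EdgeLabelAt c t (labels.getD t 0)) ∧
    ∃ (init rep : List ℕ) (r : ℕ),
      labels = init ++ (List.replicate r rep).flatten ∧
      (∀ x ∈ init, x ≠ 1) ∧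
      rep.Perm (List.range' 1 w)

/-- The restriction of a chain to `L(w,h)`: remove the elements with more than `h`
parts. -/
def restrictChain (h : ℕ) (c : List (List ℕ)) : List (List ℕ) :=
  c.filter (fun l => decide (l.length ≤ h))

/-!
Partitions in `L(3,h)` are encoded by their column lengths `(a, b, c)` with `h ≥ a ≥ b ≥ c`;
adding a box in column `j` increments the `j`-th coordinate. The chains are indexed by the pairs
`(g, k)` with `4k ≤ g` (`g` even) or `4k + 3 ≤ g` (`g` odd). The chain `(g, k)` starts at
`(g, k, k)`, first reads the labels `2^(g-4k)` (`g` even) or `2^(g-4k-2) 3 2` (`g` odd), which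
keep `a = g`, and then reads the period `1 2 3` (`g` even) or `1 3 2` (`g` odd) once for each of
the rows `g + 1, …, h`. Its ends have ranks `g + 2k` and `3h - g - 2k`. Restricting to
`L(3,h-1)` deletes the last period, or the whole chain when `g = h`, so it yields the chain
`(g, k)` of `L(3,h-1)`. The elements of each chain satisfy explicit linear constraints, from
which `(g, k)` is recovered by a case analysis on `(a - b) mod 3` and parities; hence every
triple lies on exactly one chain.
-/

open List

section RepeatedWord

variable {α β : Type*} [AddMonoid β] {f : β → α → β} {r : List α} {v : β}

theorem List.foldl_flatten_replicate (hr : ∀ b, foldl f b r = b + v) (b : β)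
    (n : ℕ) : foldl f b (replicate n r).flatten = b + n • v := by
  induction n generalizing b with
  | zero => simp
  | succ n ih => rw [replicate_succ, flatten_cons, foldl_append, hr, ih, add_assoc, succ_nsmul']

theorem List.mem_tail_scanl_flatten_replicate (hr : ∀ b, foldl f b r = b + v)
    {b x : β} {n : ℕ} :
    x ∈ (scanl f b (replicate n r).flatten).tail ↔
      ∃ j < n, x ∈ (scanl f (b + j • v) r).tail := by
  induction n generalizing b with
  | zero => simp
  | succ n ih =>
    rw [replicate_succ, flatten_cons, scanl_append, tail_append_of_ne_nil scanl_ne_nil, mem_append,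
      hr, ih]
    simp only [add_assoc, ← succ_nsmul']
    constructor
    · rintro (h | ⟨j, hj, h⟩)
      · exact ⟨0, n.succ_pos, by simpa using h⟩
      · exact ⟨j + 1, by omega, h⟩
    · rintro ⟨_ | j, hj, h⟩
      · exact Or.inl (by simpa using h)
      · exact Or.inr ⟨j, by omega, h⟩

end RepeatedWord

theorem count_add_conjCount_succ (l : List ℕ) (x : ℕ) :
    l.count x + conjCount l (x + 1) = conjCount l x := by
  induction l with
  | nil => rfl
  | cons y l ih =>
    simp only [conjCount, count_cons, countP_cons, beq_iff_eq, decide_eq_true_eq] at ih ⊢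
    split_ifs <;> omega

theorem eq_of_conjCount_eq {l l' : List ℕ} (hl : l.Pairwise (· ≥ ·))
    (hl' : l'.Pairwise (· ≥ ·)) (h : ∀ j, conjCount l j = conjCount l' j) : l = l' := by
  refine Perm.eq_of_pairwise (le := (· ≥ ·)) (fun _ _ _ _ h₁ h₂ => le_antisymm h₂ h₁) hl
    hl' (perm_iff_count.mpr fun x => ?_)
  have := count_add_conjCount_succ l x
  have := count_add_conjCount_succ l' x
  have := h x
  have := h (x + 1)
  omega

def ofColumns : ℕ × ℕ × ℕ → List ℕ
  | (a, b, c) => replicate c 3 ++ replicate (b - c) 2 ++ replicate (a - b) 1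

def IsColumns (p : ℕ × ℕ × ℕ) : Prop := p.2.2 ≤ p.2.1 ∧ p.2.1 ≤ p.1

section OfColumns

variable {p : ℕ × ℕ × ℕ}

theorem conjCount_ofColumns (a b c j : ℕ) :
    conjCount (ofColumns (a, b, c)) j =
      (if j ≤ 3 then c else 0) +
        ((if j ≤ 2 then b - c else 0) + (if j ≤ 1 then a - b else 0)) := by
  simp [conjCount, ofColumns, countP_replicate]

theorem conjCount_ofColumns_one (hp : IsColumns p) : conjCount (ofColumns p) 1 = p.1 := by
  obtain ⟨a, b, c⟩ := p
  simp only [IsColumns, conjCount_ofColumns, Nat.one_le_ofNat, ↓reduceIte, le_refl] at hp ⊢; omega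

theorem conjCount_ofColumns_two (hp : IsColumns p) : conjCount (ofColumns p) 2 = p.2.1 := by
  obtain ⟨a, b, c⟩ := p
  simp only [IsColumns, conjCount_ofColumns, Nat.reduceLeDiff, ↓reduceIte, le_refl,
    Nat.not_ofNat_le_one, add_zero] at hp ⊢; omega

theorem conjCount_ofColumns_three : conjCount (ofColumns p) 3 = p.2.2 := by
  obtain ⟨a, b, c⟩ := p
  simp [conjCount_ofColumns]

theorem length_ofColumns (hp : IsColumns p) : (ofColumns p).length = p.1 := by
  obtain ⟨a, b, c⟩ := p
  simp only [IsColumns, ofColumns, length_append, length_replicate] at hp ⊢; omega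

theorem sum_ofColumns (hp : IsColumns p) : (ofColumns p).sum = p.1 + p.2.1 + p.2.2 := by
  obtain ⟨a, b, c⟩ := p
  simp only [IsColumns, ofColumns, sum_append, sum_replicate, smul_eq_mul, mul_one] at hp ⊢; omega

theorem getD_ofColumns (hp : IsColumns p) (i : ℕ) :
    (ofColumns p).getD i 0 =
      if i < p.2.2 then 3 else if i < p.2.1 then 2 else if i < p.1 then 1 else 0 := by
  obtain ⟨a, b, c⟩ := p
  simp only [IsColumns] at hp
  simp only [ofColumns, getD_eq_getElem?_getD, getElem?_append, getElem?_replicate, length_append,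
    length_replicate]
  split_ifs <;> first | rfl | omega

theorem ofColumns_mem_boxSet {h : ℕ} (hp : IsColumns p) (hh : p.1 ≤ h) :
    ofColumns p ∈ boxSet 3 h := by
  refine ⟨?_, ?_, by rwa [length_ofColumns hp]⟩
  · simp only [ofColumns, pairwise_append, pairwise_replicate, mem_append, mem_replicate]
    grind
  · intro x hx
    simp only [ofColumns, mem_append, mem_replicate] at hx
    omega

theorem ofColumns_injective {q : ℕ × ℕ × ℕ} (hp : IsColumns p) (hq : IsColumns q)
    (h : ofColumns p = ofColumns q) : p = q := by
  have h1 := congrArg (conjCount · 1) h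
  have h2 := congrArg (conjCount · 2) h
  have h3 := congrArg (conjCount · 3) h
  simp only [conjCount_ofColumns_one hp, conjCount_ofColumns_one hq, conjCount_ofColumns_two hp,
    conjCount_ofColumns_two hq, conjCount_ofColumns_three] at h1 h2 h3
  exact Prod.ext h1 (Prod.ext h2 h3)

end OfColumns

theorem exists_ofColumns_eq {h : ℕ} {l : List ℕ} (hl : l ∈ boxSet 3 h) :
    ∃ p, IsColumns p ∧ p.1 ≤ h ∧ ofColumns p = l := by
  obtain ⟨hsort, hbound, hlen⟩ := hl
  have mono {i j : ℕ} (hij : i ≤ j) : conjCount l j ≤ conjCount l i :=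
    countP_mono_left fun x _ hx => by simp only [decide_eq_true_eq] at hx ⊢; omega
  have h32 : conjCount l 3 ≤ conjCount l 2 := mono (by norm_num)
  have h21 : conjCount l 2 ≤ conjCount l 1 := mono (by norm_num)
  have h1 : conjCount l 1 = l.length :=
    countP_eq_length.mpr fun x hx => decide_eq_true (hbound x hx).1
  have h0 : conjCount l 0 = l.length := countP_eq_length.mpr (by simp)
  refine ⟨(conjCount l 1, conjCount l 2, conjCount l 3), ⟨h32, h21⟩, h1 ▸ hlen,
    eq_of_conjCount_eq ?_ hsort fun j => ?_⟩
  · exact (ofColumns_mem_boxSet (h := conjCount l 1) ⟨h32, h21⟩ le_rfl).1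
  · rw [conjCount_ofColumns]
    match j with
    | 0 | 1 | 2 | 3 =>
      simp only [zero_le, Nat.one_le_ofNat, Nat.reduceLeDiff, Nat.not_ofNat_le_one, ↓reduceIte,
        le_refl, add_zero] <;> omega
    | j + 4 =>
      have : conjCount l (j + 4) = 0 :=
        countP_eq_zero.mpr fun x hx => by simpa using (hbound x hx).2.trans_lt (by omega)
      simp [this]

def addBox : ℕ × ℕ × ℕ → ℕ → ℕ × ℕ × ℕ
  | (a, b, c), 1 => (a + 1, b, c)
  | (a, b, c), 2 => (a, b + 1, c)
  | (a, b, c), 3 => (a, b, c + 1)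
  | p, _ => p

section AddBox

variable {p : ℕ × ℕ × ℕ} {j : ℕ}

theorem coversBox_ofColumns_addBox (hj : j ∈ [1, 2, 3]) (hp : IsColumns p)
    (hq : IsColumns (addBox p j)) : CoversBox (ofColumns p) (ofColumns (addBox p j)) := by
  obtain ⟨a, b, c⟩ := p
  simp only [mem_cons, not_mem_nil, or_false] at hj
  refine ⟨fun i => ?_, ?_⟩
  · rw [getD_ofColumns hp, getD_ofColumns hq]
    rcases hj with rfl | rfl | rfl <;> simp only [addBox] <;> split_ifs <;> omega
  · rw [sum_ofColumns hp, sum_ofColumns hq]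
    rcases hj with rfl | rfl | rfl <;> simp only [addBox] <;> omega

theorem conjCount_ofColumns_addBox (hj : j ∈ [1, 2, 3]) (hp : IsColumns p)
    (hq : IsColumns (addBox p j)) :
    conjCount (ofColumns (addBox p j)) j = conjCount (ofColumns p) j + 1 := by
  simp only [mem_cons, not_mem_nil, or_false] at hj
  rcases hj with rfl | rfl | rfl
  · rw [conjCount_ofColumns_one hp, conjCount_ofColumns_one hq]; rfl
  · rw [conjCount_ofColumns_two hp, conjCount_ofColumns_two hq]; rfl
  · rw [conjCount_ofColumns_three, conjCount_ofColumns_three]; rfl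

end AddBox

theorem mem_scanl_addBox_replicate_two {q x : ℕ × ℕ × ℕ} {n : ℕ} :
    x ∈ scanl addBox q (replicate n 2) ↔
      x.1 = q.1 ∧ x.2.2 = q.2.2 ∧ q.2.1 ≤ x.2.1 ∧ x.2.1 ≤ q.2.1 + n := by
  induction n generalizing q with
  | zero => simp only [replicate_zero, scanl_nil, mem_singleton, Prod.ext_iff, add_zero]; omega
  | succ n ih =>
    obtain ⟨a, b, c⟩ := q
    rw [replicate_succ, scanl_cons, mem_cons, ih]
    simp only [addBox, Prod.ext_iff]
    omega

theorem foldl_addBox_replicate_two (q : ℕ × ℕ × ℕ) (n : ℕ) :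
    foldl addBox q (replicate n 2) = (q.1, q.2.1 + n, q.2.2) := by
  induction n generalizing q with
  | zero => rfl
  | succ n ih =>
    obtain ⟨a, b, c⟩ := q
    rw [replicate_succ, foldl_cons, ih]
    simp only [addBox, Prod.mk.injEq, and_true, true_and]
    omega

def ChainIndex (g k : ℕ) : Prop := (g % 2 = 0 ∧ 4 * k ≤ g) ∨ (g % 2 = 1 ∧ 4 * k + 3 ≤ g)

def initWord (g k : ℕ) : List ℕ :=
  if g % 2 = 0 then replicate (g - 4 * k) 2 else replicate (g - 4 * k - 2) 2 ++ [3, 2]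

def period (g : ℕ) : List ℕ := if g % 2 = 0 then [1, 2, 3] else [1, 3, 2]

def chainWord (g k h : ℕ) : List ℕ := initWord g k ++ (replicate (h - g) (period g)).flatten

def columnChain (g k h : ℕ) : List (ℕ × ℕ × ℕ) := scanl addBox (g, k, k) (chainWord g k h)

/-- The elements of `columnChain g k h`, apart from the bound `a ≤ h`: first those with `a = g`,
then the three elements of each row `a > g`. -/
def OnChain (g k : ℕ) : ℕ × ℕ × ℕ → Prop
  | (a, b, c) =>
    if g % 2 = 0 then
      (a = g ∧ c = k ∧ k ≤ b ∧ b + 3 * k ≤ g) ∨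
      (g < a ∧ b + 3 * k + 1 = a ∧ c + g + 1 = k + a) ∨
      (g < a ∧ b + 3 * k = a ∧ c + g + 1 = k + a) ∨
      (g < a ∧ b + 3 * k = a ∧ c + g = k + a)
    else
      (a = g ∧ c = k ∧ k ≤ b ∧ b + 3 * k + 2 ≤ g) ∨
      (a = g ∧ c = k + 1 ∧ (b + 3 * k + 2 = g ∨ b + 3 * k + 1 = g)) ∨
      (g < a ∧ b + 3 * k + 2 = a ∧ c + g = k + a) ∨
      (g < a ∧ b + 3 * k + 2 = a ∧ c + g = k + a + 1) ∨
      (g < a ∧ b + 3 * k + 1 = a ∧ c + g = k + a + 1)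

theorem foldl_addBox_period (g : ℕ) (q : ℕ × ℕ × ℕ) :
    foldl addBox q (period g) = q + (1, 1, 1) := by
  obtain ⟨a, b, c⟩ := q
  unfold period
  split_ifs <;> rfl

theorem foldl_addBox_initWord {g k : ℕ} (hgk : ChainIndex g k) :
    foldl addBox (g, k, k) (initWord g k) =
      if g % 2 = 0 then (g, g - 3 * k, k) else (g, g - 3 * k - 1, k + 1) := by
  unfold ChainIndex at hgk
  unfold initWord
  split_ifs
  · simp only [foldl_addBox_replicate_two, Prod.mk.injEq, and_true, true_and]; omega
  · simp only [foldl_append, foldl_addBox_replicate_two, foldl_cons, addBox, foldl_nil,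
      Prod.mk.injEq, and_true, true_and]; omega

theorem mem_columnChain_iff {g k h : ℕ} (hgk : ChainIndex g k) (hg : g ≤ h)
    {x : ℕ × ℕ × ℕ} :
    x ∈ columnChain g k h ↔ OnChain g k x ∧ x.1 ≤ h := by
  obtain ⟨a, b, c⟩ := x
  unfold ChainIndex at hgk
  rw [columnChain, chainWord, scanl_append, mem_append,
    mem_tail_scanl_flatten_replicate (foldl_addBox_period g), foldl_addBox_initWord hgk]
  unfold initWord period
  split_ifs with hg2
  · replace hgk : 4 * k ≤ g := by omega
    simp only [mem_scanl_addBox_replicate_two, Prod.smul_mk, smul_eq_mul, mul_one, Prod.mk_add_mk,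
      scanl_cons, addBox, scanl_nil, tail_cons, mem_cons, Prod.ext_iff, not_mem_nil, or_false,
      OnChain, hg2, ↓reduceIte]
    constructor
    · rintro (⟨rfl, rfl, hb⟩ |
        ⟨j, hj, ⟨rfl, rfl, rfl⟩ | ⟨rfl, rfl, rfl⟩ | ⟨rfl, rfl, rfl⟩⟩) <;> omega
    · rintro ⟨h | h | h | h, hah⟩
      · exact Or.inl (by omega)
      all_goals exact Or.inr ⟨a - g - 1, by omega, by omega⟩
  · replace hgk : 4 * k + 3 ≤ g := by omega
    simp only [scanl_append, foldl_addBox_replicate_two, scanl_cons, addBox, scanl_nil, tail_cons,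
      mem_append, mem_scanl_addBox_replicate_two, mem_cons, Prod.ext_iff, not_mem_nil, or_false,
      Prod.smul_mk, smul_eq_mul, mul_one, Prod.mk_add_mk, OnChain, hg2, ↓reduceIte]
    constructor
    · rintro ((⟨rfl, rfl, hb⟩ | ⟨rfl, rfl, rfl⟩ | ⟨rfl, rfl, rfl⟩) |
        ⟨j, hj, ⟨rfl, rfl, rfl⟩ | ⟨rfl, rfl, rfl⟩ | ⟨rfl, rfl, rfl⟩⟩) <;> omega
    · rintro ⟨h | h | h | h | h, hah⟩
      iterate 2 exact Or.inl (by omega)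
      all_goals exact Or.inr ⟨a - g - 1, by omega, by omega⟩

theorem OnChain.isColumns {g k : ℕ} {p : ℕ × ℕ × ℕ} (hgk : ChainIndex g k)
    (hp : OnChain g k p) : IsColumns p := by
  obtain ⟨a, b, c⟩ := p
  unfold OnChain at hp
  unfold ChainIndex at hgk
  show c ≤ b ∧ b ≤ a
  split_ifs at hp <;> omega

theorem OnChain.unique {g k g' k' : ℕ} {p : ℕ × ℕ × ℕ} (hp : OnChain g k p)
    (hp' : OnChain g' k' p) : g = g' ∧ k = k' := by
  obtain ⟨a, b, c⟩ := p
  unfold OnChain at hp hp'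
  split_ifs at hp hp' <;> omega

theorem exists_onChain {p : ℕ × ℕ × ℕ} (hp : IsColumns p) :
    ∃ g k, ChainIndex g k ∧ OnChain g k p ∧ g ≤ p.1 := by
  obtain ⟨a, b, c⟩ := p
  obtain ⟨hcb, hba⟩ : c ≤ b ∧ b ≤ a := hp
  simp only [ChainIndex, OnChain]
  by_cases bottom : b + 3 * c + 2 * (a % 2) ≤ a
  · refine ⟨a, c, by omega, ?_, le_rfl⟩
    split_ifs
    · exact .inl (by omega)
    · exact .inl (by omega)
  by_cases turn :
      a % 2 = 1 ∧ 1 ≤ c ∧ a + 1 ≤ b + 3 * c ∧ b + 3 * c ≤ a + 2 ∧ 4 * c ≤ a + 1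
  · refine ⟨a, c - 1, by omega, ?_, le_rfl⟩
    rw [if_neg (by omega)]
    exact .inr (.inl (by omega))
  -- In rows `a > g` the chain `(g, k)` has `k = (a - b) / 3`, and `g` is `a - c + k` up to one.
  set k := (a - b) / 3
  set u := a - c + k
  obtain h | h | h : (a - b) % 3 = 0 ∨ (a - b) % 3 = 1 ∨ (a - b) % 3 = 2 := by omega
  all_goals obtain hu | hu := Nat.mod_two_eq_zero_or_one u
  · refine ⟨u, k, by omega, ?_, by omega⟩
    rw [if_pos (by omega)]
    exact .inr (.inr (.inr (by omega)))
  · refine ⟨u - 1, k, by omega, ?_, by omega⟩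
    rw [if_pos (by omega)]
    exact .inr (.inr (.inl (by omega)))
  · refine ⟨u + 1, k, by omega, ?_, by omega⟩
    rw [if_neg (by omega)]
    exact .inr (.inr (.inr (.inr (by omega))))
  · refine ⟨u - 1, k, by omega, ?_, by omega⟩
    rw [if_pos (by omega)]
    exact .inr (.inl (by omega))
  · refine ⟨u + 1, k, by omega, ?_, by omega⟩
    rw [if_neg (by omega)]
    exact .inr (.inr (.inr (.inl (by omega))))
  · refine ⟨u, k, by omega, ?_, by omega⟩
    rw [if_neg (by omega)]
    exact .inr (.inr (.inl (by omega)))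

section ColumnChain

variable {g k h : ℕ}

theorem foldl_addBox_chainWord (hgk : ChainIndex g k) (hg : g ≤ h) :
    foldl addBox (g, k, k) (chainWord g k h) =
      if g % 2 = 0 then (h, h - 3 * k, h - g + k) else (h, h - 3 * k - 1, h - g + k + 1) := by
  rw [chainWord, foldl_append, foldl_addBox_initWord hgk,
    foldl_flatten_replicate (foldl_addBox_period g)]
  unfold ChainIndex at hgk
  split_ifs <;> simp only [Prod.smul_mk, smul_eq_mul, mul_one, Prod.mk_add_mk, Prod.mk.injEq] <;> omega

theorem isColumns_and_fst_le_of_mem_columnChain {x : ℕ × ℕ × ℕ} (hgk : ChainIndex g k)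
    (hg : g ≤ h) (hx : x ∈ columnChain g k h) : IsColumns x ∧ x.1 ≤ h :=
  have hx := (mem_columnChain_iff hgk hg).mp hx
  ⟨hx.1.isColumns hgk, hx.2⟩

theorem mem_chainWord {j : ℕ} (hj : j ∈ chainWord g k h) : j ∈ [1, 2, 3] := by
  simp only [chainWord, initWord, period, mem_append, mem_flatten, mem_replicate] at hj
  split_ifs at hj <;>
    simp only [mem_append, mem_replicate, mem_cons, not_mem_nil, or_false, existsAndEq, and_true]
      at hj ⊢ <;>
    omega

theorem ofColumns_columnChain_succ (hgk : ChainIndex g k) (hg : g ≤ h) {t : ℕ}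
    (ht : t + 1 < (columnChain g k h).length) :
    CoversBox (ofColumns (columnChain g k h)[t]) (ofColumns (columnChain g k h)[t + 1]) ∧
      conjCount (ofColumns (columnChain g k h)[t + 1]) ((chainWord g k h).getD t 0) =
        conjCount (ofColumns (columnChain g k h)[t]) ((chainWord g k h).getD t 0) + 1 := by
  have hw : t < (chainWord g k h).length := by
    simpa [columnChain, length_scanl] using ht
  have hstep : (columnChain g k h)[t + 1] = addBox (columnChain g k h)[t] (chainWord g k h)[t] :=
    getElem_succ_scanl ht
  rw [getD_eq_getElem _ _ hw, hstep]
  have hj := mem_chainWord (getElem_mem hw)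
  have hp := (isColumns_and_fst_le_of_mem_columnChain hgk hg (getElem_mem (Nat.lt_of_succ_lt ht))).1
  have hq := (isColumns_and_fst_le_of_mem_columnChain hgk hg (hstep ▸ getElem_mem ht)).1
  exact ⟨coversBox_ofColumns_addBox hj hp hq, conjCount_ofColumns_addBox hj hp hq⟩

def scdChain (g k h : ℕ) : List (List ℕ) := (columnChain g k h).map ofColumns

theorem scdChain_ne_nil : scdChain g k h ≠ [] := by
  simp [scdChain, columnChain]

theorem scdChain_sum_headI_add_getLastD (hgk : ChainIndex g k) (hg : g ≤ h) :
    (scdChain g k h).headI.sum + ((scdChain g k h).getLastD []).sum = 3 * h := by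
  have hlast := isColumns_and_fst_le_of_mem_columnChain hgk hg (getLast_mem scanl_ne_nil)
  rw [getLast_scanl] at hlast
  have hfirst : IsColumns (g, k, k) := by
    unfold ChainIndex at hgk
    show k ≤ k ∧ k ≤ g
    omega
  obtain ⟨tl, htl⟩ := head?_eq_some_iff.mp (head?_scanl (f := addBox) (b := (g, k, k))
    (l := chainWord g k h))
  rw [scdChain, columnChain, getLastD_eq_getLast?, getLast?_map, getLast?_scanl, Option.map_some,
    Option.getD_some, sum_ofColumns hlast.1, htl, map_cons, headI_cons,
    sum_ofColumns hfirst, foldl_addBox_chainWord hgk hg]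
  unfold ChainIndex at hgk
  split_ifs <;> dsimp only <;> omega

theorem patternChain_scdChain (hgk : ChainIndex g k) (hg : g ≤ h) :
    PatternChain 3 (scdChain g k h) := by
  refine ⟨chainWord g k h, by simp [scdChain, columnChain], fun t ht => ?_,
    initWord g k, period g, h - g, rfl, ?_, ?_⟩
  · rw [EdgeLabelAt, getD_eq_getElem _ _ ht, getD_eq_getElem _ _ (Nat.lt_of_succ_lt ht)]
    simp only [scdChain, getElem_map]
    exact (ofColumns_columnChain_succ hgk hg (by simpa [scdChain] using ht)).2
  · intro x hx
    unfold initWord at hx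
    split_ifs at hx <;> simp only [mem_append, mem_replicate, mem_cons, not_mem_nil, or_false] at hx <;> omega
  · unfold period
    split_ifs <;> decide

end ColumnChain

def scd (h : ℕ) : Set (List (List ℕ)) :=
  {c | ∃ g k, ChainIndex g k ∧ g ≤ h ∧ c = scdChain g k h}

theorem existsUnique_mem_scd {h : ℕ} {l : List ℕ} (hl : l ∈ boxSet 3 h) :
    ∃! c, c ∈ scd h ∧ l ∈ c := by
  obtain ⟨p, hp, hph, rfl⟩ := exists_ofColumns_eq hl
  obtain ⟨g, k, hgk, hon, hg⟩ := exists_onChain hp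
  refine ⟨scdChain g k h, ⟨⟨g, k, hgk, hg.trans hph, rfl⟩, mem_map_of_mem ?_⟩, ?_⟩
  · exact (mem_columnChain_iff hgk (hg.trans hph)).mpr ⟨hon, hph⟩
  rintro _ ⟨⟨g', k', hgk', hg', rfl⟩, hmem⟩
  obtain ⟨q, hq, hqp⟩ := mem_map.mp hmem
  have hq' := (mem_columnChain_iff hgk' hg').mp hq
  obtain rfl := ofColumns_injective (hq'.1.isColumns hgk') hp hqp
  obtain ⟨rfl, rfl⟩ := hq'.1.unique hon
  rfl

theorem isSCD_scd (h : ℕ) : IsSCD 3 h (scd h) where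
  nonempty := by
    rintro _ ⟨g, k, -, -, rfl⟩
    exact scdChain_ne_nil
  subset := by
    rintro _ ⟨g, k, hgk, hg, rfl⟩ l hl
    obtain ⟨p, hp, rfl⟩ := mem_map.mp hl
    obtain ⟨hcol, hph⟩ := isColumns_and_fst_le_of_mem_columnChain hgk hg hp
    exact ofColumns_mem_boxSet hcol hph
  saturated := by
    rintro _ ⟨g, k, hgk, hg, rfl⟩
    rw [List.Chain', scdChain, isChain_map, isChain_iff_getElem]
    exact fun t ht => (ofColumns_columnChain_succ hgk hg ht).1
  symm := by
    rintro _ ⟨g, k, hgk, hg, rfl⟩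
    exact scdChain_sum_headI_add_getLastD hgk hg
  partitioned _ hl := existsUnique_mem_scd hl

section Restriction

variable {g k h : ℕ}

theorem columnChain_succ (hg : g ≤ h) :
    columnChain g k (h + 1) = columnChain g k h ++
      (scanl addBox (foldl addBox (g, k, k) (chainWord g k h)) (period g)).tail := by
  rw [columnChain, columnChain, ← scanl_append, chainWord, chainWord, append_assoc,
    ← flatten_concat, ← replicate_succ', Nat.sub_add_comm hg]

theorem fst_eq_of_mem_tail_scanl_period {e x : ℕ × ℕ × ℕ}
    (hx : x ∈ (scanl addBox e (period g)).tail) : x.1 = e.1 + 1 := by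
  obtain ⟨a, b, c⟩ := e
  unfold period at hx
  split_ifs at hx <;> simp only [scanl_cons, addBox, scanl_nil, tail_cons, mem_cons, not_mem_nil,
    or_false] at hx <;> rcases hx with rfl | rfl | rfl <;> rfl

theorem restrictChain_scdChain_succ (hgk : ChainIndex g k) (hg : g ≤ h) :
    restrictChain h (scdChain g k (h + 1)) = scdChain g k h := by
  rw [restrictChain, scdChain, filter_map, columnChain_succ hg, filter_append, map_append,
    filter_eq_self.mpr, filter_eq_nil_iff.mpr, map_nil, append_nil, scdChain]
  · intro x hx
    have hx1 := fst_eq_of_mem_tail_scanl_period hx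
    have hcol := (isColumns_and_fst_le_of_mem_columnChain hgk (hg.trans h.le_succ)
      (columnChain_succ hg ▸ mem_append_right _ hx)).1
    rw [foldl_addBox_chainWord hgk hg] at hx1
    simp only [Function.comp, length_ofColumns hcol, decide_eq_true_eq]
    split_ifs at hx1 <;> omega
  · intro x hx
    obtain ⟨hcol, hxh⟩ := isColumns_and_fst_le_of_mem_columnChain hgk hg hx
    simpa [length_ofColumns hcol] using hxh

theorem restrictChain_scdChain_self (hgk : ChainIndex (h + 1) k) :
    restrictChain h (scdChain (h + 1) k (h + 1)) = [] := by
  rw [restrictChain, filter_eq_nil_iff]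
  intro l hl
  obtain ⟨x, hx, rfl⟩ := mem_map.mp hl
  obtain ⟨hon, hxg⟩ := (mem_columnChain_iff hgk le_rfl).mp hx
  have hcol := hon.isColumns hgk
  obtain ⟨a, b, c⟩ := x
  have hag : a = h + 1 := by
    unfold OnChain at hon
    split_ifs at hon <;> dsimp only at hxg <;> omega
  simp only [length_ofColumns hcol, decide_eq_true_eq]
  omega

theorem setOf_restrictChain_scd_succ (h : ℕ) :
    {c' | c' ≠ [] ∧ ∃ c ∈ scd (h + 1), c' = restrictChain h c} = scd h := by
  ext c'
  constructor
  · rintro ⟨hne, _, ⟨g, k, hgk, hg, rfl⟩, rfl⟩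
    obtain hg | rfl := Nat.le_succ_iff.mp hg
    · exact ⟨g, k, hgk, hg, restrictChain_scdChain_succ hgk hg⟩
    · exact absurd (restrictChain_scdChain_self hgk) hne
  · rintro ⟨g, k, hgk, hg, rfl⟩
    exact ⟨scdChain_ne_nil, _, ⟨g, k, hgk, hg.trans h.le_succ, rfl⟩,
      (restrictChain_scdChain_succ hgk hg).symm⟩

end Restriction

/-- For every h ≥ 1 there is a symmetric chain decomposition of L(3,h)
satisfying the pattern condition and restricting to a symmetric chain decomposition of
L(3,h−1). -/
theorem scd_L3_pattern_restrict (h : ℕ) (hh : 1 ≤ h) :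
    ∃ C : Set (List (List ℕ)),
      IsSCD 3 h C ∧
      (∀ c ∈ C, PatternChain 3 c) ∧
      IsSCD 3 (h - 1) {c' | c' ≠ [] ∧ ∃ c ∈ C, c' = restrictChain (h - 1) c} := by
  obtain ⟨h, rfl⟩ : ∃ h', h = h' + 1 := ⟨h - 1, by omega⟩
  refine ⟨scd (h + 1), isSCD_scd (h + 1), ?_, ?_⟩
  · rintro _ ⟨g, k, hgk, hg, rfl⟩
    exact patternChain_scdChain hgk hg
  · rw [Nat.add_sub_cancel, setOf_restrictChain_scd_succ]
    exact isSCD_scd h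
end

section
/- For every h ≥ 1 there exists a symmetric chain decomposition 𝒞 of L′(3,h) (all chains saturated, with minimal and maximal ranks summing to 3h) such that: (a) the minimal elements of the chains of 𝒞 are exactly the partitions 1^{m1} with 0 ≤ m1 ≤ h and m1 ≠ 1; and (b) the chain whose minimal element is 1^{m1} has maximal element 3^{h − m1} 2^{m1} if m1 is even, and 3^{h − m1 + 1} 2^{m1 − 2} 1 if m1 is odd. -/
/-- The subposet L′(3,h) of L(3,h): the partitions in a 3 × h box that do not contain
(3,1,1,1) as a subpartition, i.e. those with no part equal to 3 or at most two parts
equal to 1. -/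
def Lprime3 (h : ℕ) : Set (List ℕ) :=
  {l | l ∈ boxSet 3 h ∧ (l.count 3 = 0 ∨ l.count 1 ≤ 2)}

/-!
Each chain is parametrised by rank, running from `1^m` at rank `m` up to rank `3h - m`. It first
turns its 1s into 2s one at a time, up to `2^m` for even `m` and up to `2^(m-2) 1^2` for odd `m`,
and then repeats a period-3 pattern:
`3^a 2^m → 3^a 2^m 1 → 3^a 2^(m+1) → 3^(a+1) 2^m` for even `m`,
`3^a 2^(m-2) 1^2 → 3^(a+1) 2^(m-3) 1^2 → 3^(a+1) 2^(m-2) 1 → 3^(a+1) 2^(m-2) 1^2` for odd `m`,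
so a chain never has more than two 1s once it contains a 3. A parity case analysis on the
multiplicities of `3^a 2^b 1^c ∈ L′(3,h)` shows that it lies on exactly one of these chains.
-/

open List

def ofMults (a b c : ℕ) : List ℕ := replicate a 3 ++ replicate b 2 ++ replicate c 1

section ofMults
variable {a b c a' b' c' : ℕ}

@[simp] lemma count_ofMults (a b c x : ℕ) :
    (ofMults a b c).count x =
      (if x = 3 then a else 0) + (if x = 2 then b else 0) + (if x = 1 then c else 0) := by
  simp only [ofMults, count_append, count_replicate, beq_iff_eq]
  split_ifs <;> omega

lemma ofMults_inj : ofMults a b c = ofMults a' b' c' ↔ a = a' ∧ b = b' ∧ c = c' := by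
  refine ⟨fun h => ?_, by rintro ⟨rfl, rfl, rfl⟩; rfl⟩
  have h3 := congrArg (count 3) h
  have h2 := congrArg (count 2) h
  have h1 := congrArg (count 1) h
  simp only [count_ofMults] at h1 h2 h3
  norm_num at h1 h2 h3
  omega

lemma sum_ofMults : (ofMults a b c).sum = 3 * a + 2 * b + c := by
  simp only [ofMults, sum_append, sum_replicate, smul_eq_mul]
  ring

lemma length_ofMults : (ofMults a b c).length = a + b + c := by
  simp only [ofMults, length_append, length_replicate]

lemma getD_ofMults (i : ℕ) : (ofMults a b c).getD i 0 =
    if i < a then 3 else if i < a + b then 2 else if i < a + b + c then 1 else 0 := by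
  simp only [ofMults, getD_eq_getElem?_getD, getElem?_append, getElem?_replicate, length_append,
    length_replicate]
  split_ifs <;> simp only [Option.getD_some, Option.getD_none] <;> omega

lemma pairwise_ofMults : (ofMults a b c).Pairwise (· ≥ ·) := by
  simp only [ofMults, pairwise_append, pairwise_replicate, mem_append, mem_replicate]
  grind

lemma coversBox_ofMults (ha : a ≤ a') (hab : a + b ≤ a' + b') (habc : a + b + c ≤ a' + b' + c')
    (hsum : 3 * a' + 2 * b' + c' = 3 * a + 2 * b + c + 1) :
    CoversBox (ofMults a b c) (ofMults a' b' c') := by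
  refine ⟨fun i => ?_, by simp only [sum_ofMults]; omega⟩
  simp only [getD_ofMults]
  split_ifs <;> omega

lemma eq_ofMults_of_mem_boxSet {h : ℕ} {l : List ℕ} (hl : l ∈ boxSet 3 h) :
    l = ofMults (l.count 3) (l.count 2) (l.count 1) := by
  obtain ⟨hsorted, hparts, -⟩ := hl
  refine (perm_iff_count.2 fun x => ?_).eq_of_pairwise
    (fun _ _ _ _ h₁ h₂ => le_antisymm h₂ h₁) hsorted pairwise_ofMults
  rw [count_ofMults]
  rcases em (x = 1 ∨ x = 2 ∨ x = 3) with (rfl | rfl | rfl) | hx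
  · simp
  · simp
  · simp
  · rw [count_eq_zero.2 fun hxl => hx (by have := hparts x hxl; omega)]
    split_ifs <;> omega

lemma mem_Lprime3_iff {h : ℕ} {l : List ℕ} :
    l ∈ Lprime3 h ↔ ∃ a b c, l = ofMults a b c ∧ a + b + c ≤ h ∧ (a = 0 ∨ c ≤ 2) := by
  constructor
  · rintro ⟨hbox, hcount⟩
    refine ⟨_, _, _, eq_ofMults_of_mem_boxSet hbox, ?_, hcount⟩
    have hlen := congrArg length (eq_ofMults_of_mem_boxSet hbox)
    rw [length_ofMults] at hlen
    exact hlen ▸ hbox.2.2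
  · rintro ⟨a, b, c, rfl, hlen, hc⟩
    refine ⟨⟨pairwise_ofMults, fun x hx => ?_, length_ofMults ▸ hlen⟩, by simpa using hc⟩
    simp only [ofMults, mem_append, mem_replicate] at hx
    omega

end ofMults

def evenTail (m s : ℕ) : List ℕ :=
  if s % 3 = 0 then ofMults (s / 3) m 0
  else if s % 3 = 1 then ofMults (s / 3) m 1
  else ofMults (s / 3) (m + 1) 0

def oddTail (m s : ℕ) : List ℕ :=
  if s % 3 = 0 then ofMults (s / 3) (m - 2) 2
  else if s % 3 = 1 then ofMults (s / 3 + 1) (m - 3) 2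
  else ofMults (s / 3 + 1) (m - 2) 1

lemma coversBox_evenTail (m s : ℕ) : CoversBox (evenTail m s) (evenTail m (s + 1)) := by
  unfold evenTail
  split_ifs <;> first | omega | exact coversBox_ofMults (by omega) (by omega) (by omega) (by omega)

lemma coversBox_oddTail {m : ℕ} (hm : 3 ≤ m) (s : ℕ) :
    CoversBox (oddTail m s) (oddTail m (s + 1)) := by
  unfold oddTail
  split_ifs <;> first | omega | exact coversBox_ofMults (by omega) (by omega) (by omega) (by omega)

/-- The element of rank `r` of the chain starting at `1^m`. -/
def chainElem (m r : ℕ) : List ℕ :=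
  if m % 2 = 0 then
    if r ≤ 2 * m then ofMults 0 (r - m) (2 * m - r) else evenTail m (r - 2 * m)
  else
    if r ≤ 2 * m - 2 then ofMults 0 (r - m) (2 * m - r) else oddTail m (r - (2 * m - 2))

section chainElem
variable {m r : ℕ}

lemma chainElem_of_le (hr : r + 2 * (m % 2) ≤ 2 * m) :
    chainElem m r = ofMults 0 (r - m) (2 * m - r) := by
  unfold chainElem
  split_ifs <;> first | rfl | omega

lemma chainElem_self (hm : m ≠ 1) : chainElem m m = replicate m 1 := by
  rw [chainElem_of_le (by omega), Nat.sub_self, show 2 * m - m = m by omega]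
  simp [ofMults]

lemma chainElem_eq_evenTail (hm : m % 2 = 0) (hr : 2 * m ≤ r) :
    chainElem m r = evenTail m (r - 2 * m) := by
  unfold chainElem evenTail
  split_ifs <;> first | omega | (rw [ofMults_inj]; omega)

lemma chainElem_eq_oddTail (hm : m % 2 = 1) (hr : 2 * m - 2 ≤ r) :
    chainElem m r = oddTail m (r - (2 * m - 2)) := by
  unfold chainElem oddTail
  split_ifs <;> first | omega | (rw [ofMults_inj]; omega)

lemma sum_chainElem (hm : m ≠ 1) (hr : m ≤ r) : (chainElem m r).sum = r := by
  unfold chainElem evenTail oddTail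
  split_ifs <;> simp only [sum_ofMults] <;> omega

lemma coversBox_chainElem (hm : m ≠ 1) (hr : m ≤ r) :
    CoversBox (chainElem m r) (chainElem m (r + 1)) := by
  by_cases hphase : r + 1 + 2 * (m % 2) ≤ 2 * m
  · rw [chainElem_of_le (by omega), chainElem_of_le hphase]
    apply coversBox_ofMults <;> omega
  rcases Nat.mod_two_eq_zero_or_one m with hev | hodd
  · rw [chainElem_eq_evenTail hev (by omega), chainElem_eq_evenTail hev (by omega),
      show r + 1 - 2 * m = r - 2 * m + 1 by omega]
    exact coversBox_evenTail m _
  · rw [chainElem_eq_oddTail hodd (by omega), chainElem_eq_oddTail hodd (by omega),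
      show r + 1 - (2 * m - 2) = r - (2 * m - 2) + 1 by omega]
    exact coversBox_oddTail (by omega) _

lemma chainElem_mem_Lprime3 {h : ℕ} (hm : m ≠ 1) (hmh : m ≤ h) (hr : m ≤ r) (hrh : r + m ≤ 3 * h) :
    chainElem m r ∈ Lprime3 h := by
  rw [mem_Lprime3_iff]
  unfold chainElem evenTail oddTail
  split_ifs <;> exact ⟨_, _, _, rfl, by omega, by omega⟩

lemma chainElem_top_of_even {h : ℕ} (hm : m % 2 = 0) (hmh : m ≤ h) :
    chainElem m (3 * h - m) = ofMults (h - m) m 0 := by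
  unfold chainElem evenTail
  split_ifs <;> first | omega | (rw [ofMults_inj]; omega)

lemma chainElem_top_of_odd {h : ℕ} (hm : m % 2 = 1) (hmh : m ≤ h) :
    chainElem m (3 * h - m) = ofMults (h - m + 1) (m - 2) 1 := by
  unfold chainElem oddTail
  split_ifs <;> first | omega | (rw [ofMults_inj]; omega)

lemma exists_chainElem_eq {h a b c : ℕ} (habc : a + b + c ≤ h) (hc : a = 0 ∨ c ≤ 2) :
    ∃ m, m ≤ h ∧ m ≠ 1 ∧ m ≤ 3 * a + 2 * b + c ∧ 3 * a + 2 * b + c + m ≤ 3 * h ∧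
      chainElem m (3 * a + 2 * b + c) = ofMults a b c := by
  by_cases hphase : a = 0 ∧ (2 ≤ c ∨ (b + c) % 2 = 0)
  · refine ⟨b + c, by omega, by omega, by omega, by omega, ?_⟩
    rw [chainElem_of_le (by omega), ofMults_inj]
    omega
  · -- `c` and the parity of `b` fix the position of `3^a 2^b 1^c` in the period of its chain.
    obtain ⟨m, hm⟩ : ∃ m, (c = 0 ∧ m = b - b % 2) ∨ (c = 1 ∧ m = b + 2 * (b % 2)) ∨
        (c = 2 ∧ m = b + 3 - b % 2) := by
      have : c ≤ 2 := by omega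
      interval_cases c <;> simp
    refine ⟨m, by omega, by omega, by omega, by omega, ?_⟩
    unfold chainElem evenTail oddTail
    split_ifs <;> first | omega | (rw [ofMults_inj]; omega)

lemma eq_of_chainElem_eq {m' r' : ℕ} (hm : m ≠ 1) (hm' : m' ≠ 1) (hr : m ≤ r) (hr' : m' ≤ r')
    (he : chainElem m r = chainElem m' r') : m = m' := by
  unfold chainElem evenTail oddTail at he
  split_ifs at he <;> rw [ofMults_inj] at he <;> omega

end chainElem

lemma isChain_map_range' {α : Type*} {R : α → α → Prop} {f : ℕ → α} {s : ℕ}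
    (hf : ∀ i, s ≤ i → R (f i) (f (i + 1))) (n : ℕ) : IsChain R ((range' s n).map f) :=
  (isChain_map f).2 <| (isChain_range' s n 1).imp_of_mem_imp fun i _ hi _ hij => by
    subst hij
    exact hf i (mem_range'_1.1 hi).1

def chain (h m : ℕ) : List (List ℕ) := (range' m (3 * h + 1 - 2 * m)).map (chainElem m)

def chains (h : ℕ) : Set (List (List ℕ)) := chain h '' {m | m ≤ h ∧ m ≠ 1}

section chain
variable {h m : ℕ}

lemma mem_chain {l : List ℕ} :
    l ∈ chain h m ↔ ∃ r, m ≤ r ∧ r + m ≤ 3 * h ∧ chainElem m r = l := by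
  simp only [chain, mem_map, mem_range'_1, and_assoc]
  exact exists_congr fun r =>
    ⟨fun ⟨hr, _, he⟩ => ⟨hr, by omega, he⟩, fun ⟨hr, _, he⟩ => ⟨hr, by omega, he⟩⟩

lemma chain_ne_nil (hmh : m ≤ h) : chain h m ≠ [] := by
  simp only [chain, ne_eq, map_eq_nil_iff, range'_eq_nil_iff]
  omega

lemma headI_chain (hmh : m ≤ h) : (chain h m).headI = chainElem m m := by
  rw [chain, show 3 * h + 1 - 2 * m = (3 * h - 2 * m) + 1 by omega, range'_succ]
  rfl

lemma getLastD_chain (hmh : m ≤ h) : (chain h m).getLastD [] = chainElem m (3 * h - m) := by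
  rw [getLastD_eq_getLast?, chain, getLast?_map, getLast?_range', if_neg (by omega)]
  simp only [Option.map_some, Option.getD_some]
  congr 1
  omega

lemma isChain_chain (hm : m ≠ 1) : IsChain CoversBox (chain h m) :=
  isChain_map_range' (fun _ hr => coversBox_chainElem hm hr) _

end chain

lemma existsUnique_mem_chains {h : ℕ} {l : List ℕ} (hl : l ∈ Lprime3 h) :
    ∃! c, c ∈ chains h ∧ l ∈ c := by
  obtain ⟨a, b, c, rfl, habc, hc⟩ := mem_Lprime3_iff.1 hl
  obtain ⟨m, hmh, hm, hr, hrh, he⟩ := exists_chainElem_eq habc hc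
  refine ⟨chain h m, ⟨⟨m, ⟨hmh, hm⟩, rfl⟩, mem_chain.2 ⟨_, hr, hrh, he⟩⟩, ?_⟩
  rintro _ ⟨⟨m', ⟨-, hm'⟩, rfl⟩, hl'⟩
  obtain ⟨r', hr', -, he'⟩ := mem_chain.1 hl'
  rw [eq_of_chainElem_eq hm' hm hr' hr (he'.trans he.symm)]

lemma isSCDOn_chains (h : ℕ) : IsSCDOn 3 h (Lprime3 h) (chains h) where
  nonempty := by
    rintro _ ⟨m, ⟨hmh, -⟩, rfl⟩
    exact chain_ne_nil hmh
  subset := by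
    rintro _ ⟨m, ⟨hmh, hm⟩, rfl⟩ l hl
    obtain ⟨r, hr, hrh, rfl⟩ := mem_chain.1 hl
    exact chainElem_mem_Lprime3 hm hmh hr hrh
  saturated := by
    rintro _ ⟨m, ⟨-, hm⟩, rfl⟩
    exact isChain_chain hm
  symm := by
    rintro _ ⟨m, ⟨hmh, hm⟩, rfl⟩
    rw [headI_chain hmh, getLastD_chain hmh, sum_chainElem hm le_rfl, sum_chainElem hm (by omega)]
    omega
  partitioned _ := existsUnique_mem_chains

theorem scd_Lprime3_general (h : ℕ) :
    ∃ C : Set (List (List ℕ)),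
      IsSCDOn 3 h (Lprime3 h) C ∧
      (∀ l : List ℕ,
        (∃ c ∈ C, c.headI = l) ↔
          ∃ m1 : ℕ, m1 ≤ h ∧ m1 ≠ 1 ∧ l = List.replicate m1 1) ∧
      (∀ c ∈ C, ∀ m1 : ℕ, c.headI = List.replicate m1 1 →
        (Even m1 →
          c.getLastD [] = List.replicate (h - m1) 3 ++ List.replicate m1 2) ∧
        (¬ Even m1 →
          c.getLastD [] = List.replicate (h - m1 + 1) 3 ++
            List.replicate (m1 - 2) 2 ++ [1])) := by
  refine ⟨chains h, isSCDOn_chains h, fun l => ?_, ?_⟩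
  · constructor
    · rintro ⟨_, ⟨m, ⟨hmh, hm⟩, rfl⟩, rfl⟩
      exact ⟨m, hmh, hm, by rw [headI_chain hmh, chainElem_self hm]⟩
    · rintro ⟨m, hmh, hm, rfl⟩
      exact ⟨chain h m, ⟨m, ⟨hmh, hm⟩, rfl⟩, by rw [headI_chain hmh, chainElem_self hm]⟩
  · rintro _ ⟨m, ⟨hmh, hm⟩, rfl⟩ m1 hhead
    rw [headI_chain hmh, chainElem_self hm] at hhead
    obtain rfl : m = m1 := by simpa using congrArg length hhead
    rw [getLastD_chain hmh, Nat.even_iff]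
    refine ⟨fun hev => ?_, fun hodd => ?_⟩
    · simp [chainElem_top_of_even hev hmh, ofMults]
    · simp [chainElem_top_of_odd (by omega) hmh, ofMults]

/-- For every h ≥ 1 there is a symmetric chain decomposition 𝒞 of
L′(3,h) (all chains saturated, minimal and maximal ranks summing to 3h) such that: (a)
the minimal elements of its chains are exactly the partitions 1^{m₁} with 0 ≤ m₁ ≤ h and
m₁ ≠ 1; (b) the chain with minimal element 1^{m₁} has maximal element 3^{h−m₁} 2^{m₁} if
m₁ is even, and 3^{h−m₁+1} 2^{m₁−2} 1 if m₁ is odd. -/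
theorem scd_Lprime3 (h : ℕ) (hh : 1 ≤ h) :
    ∃ C : Set (List (List ℕ)),
      IsSCDOn 3 h (Lprime3 h) C ∧
      (∀ l : List ℕ,
        (∃ c ∈ C, c.headI = l) ↔
          ∃ m1 : ℕ, m1 ≤ h ∧ m1 ≠ 1 ∧ l = List.replicate m1 1) ∧
      (∀ c ∈ C, ∀ m1 : ℕ, c.headI = List.replicate m1 1 →
        (Even m1 →
          c.getLastD [] = List.replicate (h - m1) 3 ++ List.replicate m1 2) ∧
        (¬ Even m1 →
          c.getLastD [] = List.replicate (h - m1 + 1) 3 ++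
            List.replicate (m1 - 2) 2 ++ [1])) :=
  scd_Lprime3_general h
end

section
/- For every h ≥ 1, the two-variable plethysm has Schur expansion s_4[s_h](x,y) = Σ_{λ = (λ1, λ2) ⊢ 4h} a^λ s_λ(x,y), where for each two-row partition λ = (λ1, λ2) of 4h the coefficient a^λ equals the number of partitions μ of λ2 of the form μ = 4^{m4} 2^{m2} 1^{m1} (only parts equal to 4, 2 or 1) satisfying m1 + m2 + m4 ≤ h, m2 even, m1 ≥ 2·m4, and m1 ≠ 2·m4 + 1. -/
/-- The number of partitions of `b` all of whose parts are 4, 2 or 1, say with `m4`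
fours, `m2` twos and `m1` ones, such that `m1 + m2 + m4 ≤ h`, `m2` is even,
`m1 ≥ 2 m4` and `m1 ≠ 2 m4 + 1`. -/
noncomputable def coeff4 (h b : ℕ) : ℕ :=
  Set.ncard {l : List ℕ | ∃ m4 m2 m1 : ℕ,
    l = List.replicate m4 4 ++ List.replicate m2 2 ++ List.replicate m1 1 ∧
    l.sum = b ∧ m1 + m2 + m4 ≤ h ∧ Even m2 ∧ 2 * m4 ≤ m1 ∧ m1 ≠ 2 * m4 + 1}

namespace PlethysmFour

open Finset MvPolynomial

def monotoneWithSum (w h s : ℕ) : Finset (Fin w → Fin (h + 1)) :=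
  {f | (∀ i j, i ≤ j → f i ≤ f j) ∧ ∑ j, (f j : ℕ) = s}

lemma pleth2_eq_sum (w h : ℕ) :
    pleth2 w h = ∑ s ∈ range (w * h + 1),
      (#(monotoneWithSum w h s) : ℤ) •
        (X 0 ^ (w * h - s) * X 1 ^ s : MvPolynomial (Fin 2) ℤ) := by
  have hsum_le (f : Fin w → Fin (h + 1)) : ∑ j, (f j : ℕ) ≤ w * h := by
    simpa using sum_le_sum fun j (_ : j ∈ univ) => Fin.is_le (f j)
  have hprod (f : Fin w → Fin (h + 1)) :
      ∏ j, (X 0 ^ (h - (f j : ℕ)) * X 1 ^ (f j : ℕ) : MvPolynomial (Fin 2) ℤ) =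
        X 0 ^ (w * h - ∑ j, (f j : ℕ)) * X 1 ^ ∑ j, (f j : ℕ) := by
    rw [prod_mul_distrib, prod_pow_eq_pow_sum, prod_pow_eq_pow_sum,
      sum_tsub_distrib _ fun j _ => Fin.is_le (f j)]
    simp only [sum_const, card_univ, Fintype.card_fin, smul_eq_mul]
  rw [pleth2, ← sum_fiberwise_of_maps_to (g := fun f => ∑ j, (f j : ℕ)) (t := range (w * h + 1))
    fun f _ => mem_range.2 (Nat.lt_succ_of_le (hsum_le f))]
  refine sum_congr rfl fun s _ => ?_
  rw [monotoneWithSum, ← filter_filter, Nat.cast_smul_eq_nsmul, ← sum_const]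
  exact sum_congr rfl fun f hf => by rw [hprod, (mem_filter.1 hf).2]

lemma schur2_eq_sum_ite {n b : ℕ} (hb : 2 * b ≤ n) :
    schur2 (n - b) b = ∑ s ∈ range (n + 1),
      if b ≤ s ∧ s + b ≤ n then (X 0 ^ (n - s) * X 1 ^ s : MvPolynomial (Fin 2) ℤ) else 0 := by
  rw [← sum_filter, schur2]
  refine sum_nbij' (b + ·) (· - b) ?_ ?_ ?_ ?_ fun i _ => by rw [Nat.sub_sub]
  all_goals intro i hi
  all_goals simp only [mem_filter, mem_range] at hi ⊢
  all_goals omega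

lemma sum_smul_schur2 (n : ℕ) (c : ℕ → ℤ) :
    ∑ b ∈ range (n / 2 + 1), c b • schur2 (n - b) b =
      ∑ s ∈ range (n + 1), (∑ b ∈ range (min s (n - s) + 1), c b) •
        (X 0 ^ (n - s) * X 1 ^ s : MvPolynomial (Fin 2) ℤ) := by
  calc ∑ b ∈ range (n / 2 + 1), c b • schur2 (n - b) b
      = ∑ b ∈ range (n / 2 + 1), ∑ s ∈ range (n + 1),
          if b ≤ s ∧ s + b ≤ n then c b • (X 0 ^ (n - s) * X 1 ^ s) else 0 := by
        refine sum_congr rfl fun b hb => ?_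
        rw [schur2_eq_sum_ite (by rw [mem_range] at hb; omega), smul_sum]
        simp only [smul_ite, smul_zero]
    _ = ∑ s ∈ range (n + 1), ∑ b ∈ range (n / 2 + 1),
          if b ≤ s ∧ s + b ≤ n then c b • (X 0 ^ (n - s) * X 1 ^ s) else 0 := sum_comm
    _ = _ := by
        refine sum_congr rfl fun s hs => ?_
        have hrange :
            {b ∈ range (n / 2 + 1) | b ≤ s ∧ s + b ≤ n} = range (min s (n - s) + 1) := by
          ext b; rw [mem_range] at hs; simp only [mem_filter, mem_range]; omega
        rw [← sum_filter, hrange, sum_smul]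

def boxQuads (h s : ℕ) : Finset (ℕ × ℕ × ℕ × ℕ) :=
  (range (s + 1) ×ˢ range (s + 1) ×ˢ range (s + 1) ×ˢ range (s + 1)).filter fun x =>
    x.1 ≤ x.2.1 ∧ x.2.1 ≤ x.2.2.1 ∧ x.2.2.1 ≤ x.2.2.2 ∧ x.2.2.2 ≤ h ∧
      x.1 + x.2.1 + x.2.2.1 + x.2.2.2 = s

@[simp] lemma mem_boxQuads {h s a b c d : ℕ} :
    (a, b, c, d) ∈ boxQuads h s ↔ a ≤ b ∧ b ≤ c ∧ c ≤ d ∧ d ≤ h ∧ a + b + c + d = s := by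
  simp only [boxQuads, mem_filter, mem_product, mem_range]; omega

lemma card_monotoneWithSum_four (h s : ℕ) : #(monotoneWithSum 4 h s) = #(boxQuads h s) := by
  refine card_nbij (fun f => ((f 0 : ℕ), (f 1 : ℕ), (f 2 : ℕ), (f 3 : ℕ))) ?_ ?_ ?_
  · intro f hf
    simp only [monotoneWithSum, coe_filter, Set.mem_ofPred_eq, mem_univ, true_and,
      Fin.sum_univ_four] at hf
    obtain ⟨hmono, hsum⟩ := hf
    exact mem_boxQuads.2 ⟨hmono 0 1 (by decide), hmono 1 2 (by decide), hmono 2 3 (by decide),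
      Fin.is_le (f 3), hsum⟩
  · intro f _ g _ hfg
    simp only [Prod.mk.injEq, Fin.val_inj] at hfg
    funext k
    fin_cases k
    exacts [hfg.1, hfg.2.1, hfg.2.2.1, hfg.2.2.2]
  · rintro ⟨a, b, c, d⟩ hx
    obtain ⟨hab, hbc, hcd, hd, hsum⟩ := mem_boxQuads.1 hx
    refine ⟨![⟨a, by omega⟩, ⟨b, by omega⟩, ⟨c, by omega⟩, ⟨d, by omega⟩], ?_, rfl⟩
    simp only [monotoneWithSum, coe_filter, Set.mem_ofPred_eq, mem_univ, true_and,
      Fin.sum_univ_four]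
    refine ⟨Fin.monotone_iff_le_succ.2 fun i => ?_, hsum⟩
    fin_cases i
    exacts [hab, hbc, hcd]

-- `(a, c, e)` stands for the partition `4^a 2^(2c) 1^(e + 2a)` of `b` counted by `coeff4 h b`.
def coeffTriples (h b : ℕ) : Finset (ℕ × ℕ × ℕ) :=
  (range (b + 1) ×ˢ range (b + 1) ×ˢ range (b + 1)).filter fun x =>
    x.2.2 ≠ 1 ∧ 6 * x.1 + 4 * x.2.1 + x.2.2 = b ∧ 3 * x.1 + 2 * x.2.1 + x.2.2 ≤ h

@[simp] lemma mem_coeffTriples {h b a c e : ℕ} :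
    (a, c, e) ∈ coeffTriples h b ↔ e ≠ 1 ∧ 6 * a + 4 * c + e = b ∧ 3 * a + 2 * c + e ≤ h := by
  simp only [coeffTriples, mem_filter, mem_product, mem_range]; omega

lemma coeff4_eq_card_coeffTriples (h b : ℕ) : coeff4 h b = #(coeffTriples h b) := by
  let μ : ℕ × ℕ × ℕ → List ℕ := fun x =>
    List.replicate x.1 4 ++ List.replicate (2 * x.2.1) 2 ++ List.replicate (x.2.2 + 2 * x.1) 1
  have hsum (x : ℕ × ℕ × ℕ) : (μ x).sum = 6 * x.1 + 4 * x.2.1 + x.2.2 := by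
    simp only [μ, List.sum_append, List.sum_replicate, smul_eq_mul]; ring
  have hμ : Set.InjOn μ (coeffTriples h b) := by
    rintro ⟨a, c, e⟩ - ⟨a', c', e'⟩ - hx
    have h4 := congrArg (List.count 4) hx
    have h2 := congrArg (List.count 2) hx
    have h1 := congrArg (List.count 1) hx
    simp only [μ, List.count_append, List.count_replicate, Nat.reduceBEq, Bool.false_eq_true,
      ↓reduceIte, add_zero, zero_add] at h4 h2 h1
    simp only [Prod.mk.injEq]
    omega
  rw [coeff4, ← card_image_of_injOn hμ, ← Set.ncard_coe_finset]
  congr 1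
  ext l
  simp only [coe_image, Set.mem_image, mem_coe, Set.mem_ofPred_eq, Prod.exists, mem_coeffTriples]
  constructor
  · rintro ⟨m4, m2, m1, rfl, hb, hle, ⟨c, rfl⟩, hge, hne⟩
    have hl : μ (m4, c, m1 - 2 * m4) =
        List.replicate m4 4 ++ List.replicate (c + c) 2 ++ List.replicate m1 1 := by
      simp only [μ, Nat.sub_add_cancel hge, ← two_mul]
    rw [← hl, hsum] at hb
    exact ⟨m4, c, m1 - 2 * m4, ⟨by omega, by omega, by omega⟩, hl⟩
  · rintro ⟨a, c, e, ⟨he, rfl, hh⟩, rfl⟩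
    exact ⟨a, 2 * c, e + 2 * a, rfl, hsum _, by omega, even_two_mul c, by omega, by omega⟩

def coeffTriplesLE (h M : ℕ) : Finset (ℕ × ℕ × ℕ) :=
  (range (M + 1) ×ˢ range (M + 1) ×ˢ range (M + 1)).filter fun x =>
    x.2.2 ≠ 1 ∧ 6 * x.1 + 4 * x.2.1 + x.2.2 ≤ M ∧ 3 * x.1 + 2 * x.2.1 + x.2.2 ≤ h

@[simp] lemma mem_coeffTriplesLE {h M a c e : ℕ} :
    (a, c, e) ∈ coeffTriplesLE h M ↔ e ≠ 1 ∧ 6 * a + 4 * c + e ≤ M ∧ 3 * a + 2 * c + e ≤ h := by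
  simp only [coeffTriplesLE, mem_filter, mem_product, mem_range]; omega

lemma card_coeffTriplesLE_eq_sum (h M : ℕ) :
    #(coeffTriplesLE h M) = ∑ b ∈ range (M + 1), #(coeffTriples h b) := by
  rw [card_eq_sum_card_fiberwise (f := fun x => 6 * x.1 + 4 * x.2.1 + x.2.2) (t := range (M + 1))]
  · refine sum_congr rfl fun b hb => congrArg card ?_
    ext ⟨a, c, e⟩
    simp only [mem_range] at hb
    simp only [mem_filter, mem_coeffTriplesLE, mem_coeffTriples]
    omega
  · rintro ⟨a, c, e⟩ hx
    simp only [mem_coe, mem_coeffTriplesLE, mem_range] at hx ⊢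
    omega

-- `#(pairsLE m)` is the number of partitions of `m` into at most three parts.
def pairsLE (m : ℕ) : Finset (ℕ × ℕ) :=
  (range (m + 1) ×ˢ range (m + 1)).filter fun p => 3 * p.1 + 2 * p.2 ≤ m

def pairsEq (k : ℕ) : Finset (ℕ × ℕ) :=
  (range (k + 1) ×ˢ range (k + 1)).filter fun p => 3 * p.1 + 2 * p.2 = k

@[simp] lemma mem_pairsLE {m a c : ℕ} : (a, c) ∈ pairsLE m ↔ 3 * a + 2 * c ≤ m := by
  simp only [pairsLE, mem_filter, mem_product, mem_range]; omega

@[simp] lemma mem_pairsEq {k a c : ℕ} : (a, c) ∈ pairsEq k ↔ 3 * a + 2 * c = k := by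
  simp only [pairsEq, mem_filter, mem_product, mem_range]; omega

lemma card_boxQuads_symm {h s : ℕ} (hs : s ≤ 4 * h) :
    #(boxQuads h (4 * h - s)) = #(boxQuads h s) := by
  refine card_nbij' (fun x => (h - x.2.2.2, h - x.2.2.1, h - x.2.1, h - x.1))
    (fun x => (h - x.2.2.2, h - x.2.2.1, h - x.2.1, h - x.1)) ?_ ?_ ?_ ?_ <;>
  simp only [Set.MapsTo, Set.LeftInvOn, Set.RightInvOn, Prod.forall, mem_coe,
    mem_boxQuads, Prod.mk.injEq] <;> intros <;> omega

lemma boxQuads_succ_of_le {h s : ℕ} (hs : s ≤ h) : boxQuads (h + 1) s = boxQuads h s := by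
  ext ⟨a, b, c, d⟩; simp only [mem_boxQuads]; omega

lemma card_boxQuads_succ {h s : ℕ} (hs₁ : h + 1 ≤ s) (hs₂ : s ≤ 2 * h + 2) :
    #(boxQuads (h + 1) s) = #(boxQuads h s) + #(pairsLE (s - (h + 1))) := by
  rw [← card_filter_add_card_filter_not (fun x => x.2.2.2 ≤ h)]
  congr 1
  · congr 1; ext ⟨a, b, c, d⟩; simp only [mem_filter, mem_boxQuads]; omega
  · refine card_nbij' (fun x => (x.1, x.2.1 - x.1))
      (fun p => (p.1, p.1 + p.2, s - (h + 1) - (2 * p.1 + p.2), h + 1)) ?_ ?_ ?_ ?_ <;>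
    simp only [Set.MapsTo, Set.LeftInvOn, Set.RightInvOn, Prod.forall, mem_coe,
      mem_filter, mem_boxQuads, mem_pairsLE, Prod.mk.injEq, true_and] <;>
    intros <;> omega

lemma coeffTriplesLE_succ_of_le {h M : ℕ} (hM : M ≤ h) :
    coeffTriplesLE (h + 1) M = coeffTriplesLE h M := by
  ext ⟨a, c, e⟩; simp only [mem_coeffTriplesLE]; omega

lemma card_coeffTriplesLE_succ {h M : ℕ} (hM₁ : h + 1 ≤ M) (hM₂ : M ≤ 2 * h + 2) :
    #(coeffTriplesLE (h + 1) M) =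
      #(coeffTriplesLE h M) +
        #((pairsLE (M - (h + 1))).filter fun p => 3 * p.1 + 2 * p.2 ≠ h) := by
  rw [← card_filter_add_card_filter_not (fun x => 3 * x.1 + 2 * x.2.1 + x.2.2 ≤ h)]
  congr 1
  · congr 1; ext ⟨a, c, e⟩; simp only [mem_filter, mem_coeffTriplesLE]; omega
  · refine card_nbij' (fun x => (x.1, x.2.1)) (fun p => (p.1, p.2, h + 1 - (3 * p.1 + 2 * p.2)))
      ?_ ?_ ?_ ?_ <;>
    simp only [Set.MapsTo, Set.LeftInvOn, Set.RightInvOn, Prod.forall, mem_coe, mem_filter,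
      mem_coeffTriplesLE, mem_pairsLE, Prod.mk.injEq, true_and, implies_true] <;>
    intros <;> omega

-- A triple counted at `M` but not at `4h - M ∈ {2h - 2, 2h - 1}` has `e = 0` and `3a + 2c = h`.
lemma card_coeffTriplesLE_top {h M : ℕ} (hh : 1 ≤ h) (hM₁ : 2 * h + 1 ≤ M)
    (hM₂ : M ≤ 2 * h + 2) :
    #(coeffTriplesLE h M) = #(coeffTriplesLE h (4 * h - M)) + #(pairsEq h) := by
  rw [← card_filter_add_card_filter_not (fun x => 6 * x.1 + 4 * x.2.1 + x.2.2 ≤ 4 * h - M)]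
  congr 1
  · congr 1; ext ⟨a, c, e⟩; simp only [mem_filter, mem_coeffTriplesLE]; omega
  · refine card_nbij' (fun x => (x.1, x.2.1)) (fun p => (p.1, p.2, 0)) ?_ ?_ ?_ ?_ <;>
    simp only [Set.MapsTo, Set.LeftInvOn, Set.RightInvOn, Prod.forall, mem_coe, mem_filter,
      mem_coeffTriplesLE, mem_pairsEq, Prod.mk.injEq, true_and, implies_true] <;>
    intros <;> omega

lemma card_filter_pairsLE_ne_add {m k : ℕ} (hk : k ≤ m) :
    #((pairsLE m).filter fun p => 3 * p.1 + 2 * p.2 ≠ k) + #(pairsEq k) = #(pairsLE m) := by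
  rw [← card_filter_add_card_filter_not (s := pairsLE m) (fun p => 3 * p.1 + 2 * p.2 ≠ k)]
  congr 2; ext ⟨a, c⟩; simp only [mem_filter, mem_pairsLE, mem_pairsEq]; omega

lemma filter_pairsLE_ne_of_lt {m k : ℕ} (hm : m < k) :
    ((pairsLE m).filter fun p => 3 * p.1 + 2 * p.2 ≠ k) = pairsLE m :=
  filter_true_of_mem fun ⟨a, c⟩ hp => by rw [mem_pairsLE] at hp; omega

theorem card_boxQuads_eq_card_coeffTriplesLE :
    ∀ {h s : ℕ}, s ≤ 2 * h → #(boxQuads h s) = #(coeffTriplesLE h s)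
  | 0, s, hs => by
    obtain rfl : s = 0 := by omega
    decide
  | h + 1, s, hs => by
    rcases le_or_gt s h with hsh | hsh
    · rw [boxQuads_succ_of_le hsh, coeffTriplesLE_succ_of_le hsh,
        card_boxQuads_eq_card_coeffTriplesLE (by omega)]
    rcases le_or_gt s (2 * h) with hs2 | hs2
    · rw [card_boxQuads_succ hsh (by omega), card_coeffTriplesLE_succ hsh (by omega),
        filter_pairsLE_ne_of_lt (by omega), card_boxQuads_eq_card_coeffTriplesLE hs2]
    rcases Nat.eq_zero_or_pos h with rfl | hh
    · interval_cases s <;> decide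
    have hQ : #(boxQuads h s) = #(coeffTriplesLE h (4 * h - s)) := by
      rw [← card_boxQuads_symm (by omega), card_boxQuads_eq_card_coeffTriplesLE (by omega)]
    have hpairs := card_filter_pairsLE_ne_add (m := s - (h + 1)) (k := h) (by omega)
    rw [card_boxQuads_succ hsh (by omega), card_coeffTriplesLE_succ hsh (by omega),
      card_coeffTriplesLE_top hh hs2 (by omega)]
    omega

theorem card_boxQuads_eq_card_coeffTriplesLE_min {h s : ℕ} (hs : s ≤ 4 * h) :
    #(boxQuads h s) = #(coeffTriplesLE h (min s (4 * h - s))) := by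
  rcases le_total s (2 * h) with hs2 | hs2
  · rw [min_eq_left (by omega), card_boxQuads_eq_card_coeffTriplesLE hs2]
  · rw [min_eq_right (by omega), ← card_boxQuads_symm hs,
      card_boxQuads_eq_card_coeffTriplesLE (by omega)]

end PlethysmFour

open PlethysmFour

theorem plethysm_four_coeff_general (h : ℕ) :
    pleth2 4 h =
      ∑ b ∈ Finset.range (4 * h / 2 + 1),
        (coeff4 h b : ℤ) • schur2 (4 * h - b) b := by
  rw [sum_smul_schur2, pleth2_eq_sum]
  refine Finset.sum_congr rfl fun s hs => ?_
  rw [card_monotoneWithSum_four,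
    card_boxQuads_eq_card_coeffTriplesLE_min (Nat.lt_succ_iff.1 (Finset.mem_range.1 hs)),
    card_coeffTriplesLE_eq_sum]
  simp only [coeff4_eq_card_coeffTriples, Nat.cast_sum]

/-- For every h ≥ 1, the two-variable plethysm has Schur expansion
s₄[s_h](x,y) = Σ_{(λ₁,λ₂) ⊢ 4h} a^λ s_λ(x,y), where a^{(λ₁,λ₂)} is the number of
partitions μ of λ₂ of the form 4^{m₄} 2^{m₂} 1^{m₁} with m₁ + m₂ + m₄ ≤ h, m₂ even,
m₁ ≥ 2 m₄ and m₁ ≠ 2 m₄ + 1. -/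
theorem plethysm_four_coeff (h : ℕ) (hh : 1 ≤ h) :
    pleth2 4 h =
      ∑ b ∈ Finset.range (4 * h / 2 + 1),
        (coeff4 h b : ℤ) • schur2 (4 * h - b) b :=
  plethysm_four_coeff_general h
end

section
/- For every h ≥ 5, the two-variable plethysm satisfies the recursion s_4[s_h](x,y) = (xy)^6 · s_4[s_{h−3}](x,y) + (xy)^4 · s_4[s_{h−2}](x,y) − (xy)^{10} · s_4[s_{h−5}](x,y) + s_{(4h)}(x,y) + Σ_{k=2}^{h} s_{(4h−k, k)}(x,y). -/
/-! The plethysm `s_w[s_h](x,y)` is the homogenized Gaussian binomial coefficient: splitting a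
weakly increasing sequence by its last entry `d` gives
`s_{w+1}[s_h] = Σ_{d ≤ h} x^{(w+1)(h-d)} y^d s_w[s_d]`, whence
`∏_{i=1}^w (x^i - y^i) · s_w[s_h] = ∏_{i=1}^w (x^{h+i} - y^{h+i})` by induction on `w` and `h`.
On the other side `(x - y)^2 s_{(a,b)}` is a difference of two binomials, so the sum over `k`
telescopes. Multiplying the recursion by the nonzero polynomial
`(x - y)^2 (x^2 - y^2)(x^3 - y^3)(x^4 - y^4)` thus turns it into a ring identity between
explicit products of binomials. -/

lemma Fin.monotone_snoc {α : Type*} [Preorder α] {n : ℕ} {g : Fin n → α} (hg : Monotone g)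
    {a : α} (ha : ∀ i, g i ≤ a) : Monotone (Fin.snoc (α := fun _ ↦ α) g a) := by
  intro i j hij
  induction j using Fin.lastCases with
  | last => induction i using Fin.lastCases <;> simp [ha]
  | cast j =>
    induction i using Fin.lastCases with
    | last => exact absurd hij (not_le.2 (Fin.castSucc_lt_last j))
    | cast i => simpa using hg (Fin.castSucc_le_castSucc_iff.1 hij)

open MvPolynomial Finset

local notation "x" => (X 0 : MvPolynomial (Fin 2) ℤ)
local notation "y" => (X 1 : MvPolynomial (Fin 2) ℤ)

lemma pleth2_zero_left (h : ℕ) : pleth2 0 h = 1 := by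
  simp [pleth2]

lemma pleth2_succ_left (w h : ℕ) :
    pleth2 (w + 1) h = ∑ d ∈ range (h + 1), x ^ ((w + 1) * (h - d)) * y ^ d * pleth2 w d := by
  unfold pleth2
  rw [← sum_fiberwise_of_maps_to (t := range (h + 1)) (g := fun f => (f (Fin.last w) : ℕ))
    (fun f _ => mem_range.2 (f (Fin.last w)).isLt)]
  refine sum_congr rfl fun d hd => ?_
  rw [mem_range] at hd
  rw [mul_sum]
  refine sum_bij' (fun f hf => fun j => ⟨f (Fin.castSucc j), ?_⟩)
    (fun g _ => Fin.snoc (α := fun _ => Fin (h + 1))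
      (fun j => Fin.castLE (by omega) (g j)) ⟨d, hd⟩)
    ?_ ?_ ?_ ?_ ?_
  · simp only [mem_filter, mem_univ, true_and] at hf
    exact hf.2 ▸ Nat.lt_succ_of_le (hf.1 _ _ (Fin.le_last _))
  · intro f hf
    simp only [mem_filter, mem_univ, true_and] at hf ⊢
    intro i j hij
    exact hf.1 _ _ (Fin.castSucc_le_castSucc_iff.2 hij)
  · intro g hg
    simp only [mem_filter, mem_univ, true_and] at hg ⊢
    refine ⟨Fin.monotone_snoc (fun i j hij => ?_) fun i => ?_, by simp⟩
    · exact hg i j hij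
    · exact Fin.le_def.2 (Nat.lt_succ_iff.1 (g i).isLt)
  · intro f hf
    simp only [mem_filter, mem_univ, true_and] at hf
    funext j
    induction j using Fin.lastCases with
    | last => ext; simp [← hf.2]
    | cast j => ext; simp
  · intro g _
    funext j
    ext; simp
  · intro f hf
    obtain ⟨hmono, hlast⟩ := mem_filter.1 hf
    have hle (j : Fin w) : (f (Fin.castSucc j) : ℕ) ≤ d :=
      hlast ▸ (mem_filter.1 hmono).2 _ _ (Fin.le_last _)
    have split (j : Fin w) : x ^ (h - f (Fin.castSucc j)) * y ^ (f (Fin.castSucc j) : ℕ) =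
        x ^ (h - d) * (x ^ (d - f (Fin.castSucc j)) * y ^ (f (Fin.castSucc j) : ℕ)) := by
      rw [← mul_assoc, ← pow_add, Nat.sub_add_sub_cancel (by omega) (hle j)]
    rw [Fin.prod_univ_castSucc]
    simp only [hlast]
    rw [prod_congr rfl fun j _ => split j, prod_mul_distrib,
      prod_const, card_univ, Fintype.card_fin]
    ring

lemma pleth2_zero_right (w : ℕ) : pleth2 w 0 = 1 := by
  induction w with
  | zero => exact pleth2_zero_left 0
  | succ w ih => simp [pleth2_succ_left, ih]

lemma pleth2_succ_succ (w h : ℕ) :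
    pleth2 (w + 1) (h + 1) = x ^ (w + 1) * pleth2 (w + 1) h + y ^ (h + 1) * pleth2 w (h + 1) := by
  rw [pleth2_succ_left, sum_range_succ, pleth2_succ_left, mul_sum]
  congr 1
  · refine sum_congr rfl fun d hd => ?_
    rw [show (w + 1) * (h + 1 - d) = (w + 1) + (w + 1) * (h - d) by
      rw [mem_range] at hd; rw [Nat.sub_add_comm (by omega)]; ring, pow_add]
    ring
  · simp

lemma prod_pow_sub_pow_mul_pleth2 (w h : ℕ) :
    (∏ i ∈ range w, (x ^ (i + 1) - y ^ (i + 1))) * pleth2 w h =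
      ∏ i ∈ range w, (x ^ (h + i + 1) - y ^ (h + i + 1)) := by
  induction w generalizing h with
  | zero => simp [pleth2_zero_left]
  | succ w ihw =>
    induction h with
    | zero => simp [pleth2_zero_right]
    | succ h ihh =>
      have hP : ∏ i ∈ range (w + 1), (x ^ (h + i + 1) - y ^ (h + i + 1)) =
          (∏ i ∈ range w, (x ^ (h + 1 + i + 1) - y ^ (h + 1 + i + 1)))
            * (x ^ (h + 1) - y ^ (h + 1)) := by
        rw [prod_range_succ']
        simp only [add_assoc, add_comm 1, add_zero]
      rw [pleth2_succ_succ, mul_add, mul_left_comm, ihh, hP,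
        prod_range_succ (fun i => x ^ (i + 1) - y ^ (i + 1)), prod_range_succ]
      linear_combination y ^ (h + 1) * (x ^ (w + 1) - y ^ (w + 1)) * ihw (h + 1)

lemma sub_mul_schur2 {a b : ℕ} (hba : b ≤ a) :
    (x - y) * schur2 a b = x ^ (a + 1) * y ^ b - x ^ b * y ^ (a + 1) := by
  obtain ⟨c, rfl⟩ : ∃ c, a = b + c := ⟨a - b, by omega⟩
  have hsum : schur2 (b + c) b =
      (x * y) ^ b * ∑ i ∈ range (c + 1), y ^ i * x ^ (c + 1 - 1 - i) := by
    rw [schur2, Nat.add_sub_cancel_left, mul_sum]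
    refine sum_congr rfl fun i hi => ?_
    rw [mem_range] at hi
    rw [show b + c - i = b + (c + 1 - 1 - i) by omega, pow_add, pow_add]
    ring
  rw [hsum]
  linear_combination (-(x * y) ^ b) * geom_sum₂_mul y x (c + 1)

lemma sub_sq_mul_schur2 {a b : ℕ} (hba : b ≤ a) :
    (x - y) ^ 2 * schur2 a b =
      (x ^ (a + 2) * y ^ b + x ^ b * y ^ (a + 2))
        - (x ^ (a + 1) * y ^ (b + 1) + x ^ (b + 1) * y ^ (a + 1)) := by
  rw [sq, mul_assoc, sub_mul_schur2 hba]
  ring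

lemma sub_sq_mul_sum_schur2 {N m n : ℕ} (hmn : m ≤ n) (hnN : 2 * n ≤ N) :
    (x - y) ^ 2 * ∑ k ∈ Icc m n, schur2 (N - k) k =
      (x ^ (N + 2 - m) * y ^ m + x ^ m * y ^ (N + 2 - m))
        - (x ^ (N + 2 - (n + 1)) * y ^ (n + 1) + x ^ (n + 1) * y ^ (N + 2 - (n + 1))) := by
  set G : ℕ → MvPolynomial (Fin 2) ℤ :=
    fun k => x ^ (N + 2 - k) * y ^ k + x ^ k * y ^ (N + 2 - k)
  have step : ∀ k ∈ Icc m n, (x - y) ^ 2 * schur2 (N - k) k = -(G (k + 1) - G k) := by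
    intro k hk
    rw [mem_Icc] at hk
    rw [sub_sq_mul_schur2 (by omega), show N - k + 2 = N + 2 - k by omega,
      show N - k + 1 = N + 2 - (k + 1) by omega]
    ring
  rw [mul_sum, sum_congr rfl step, sum_neg_distrib, sum_Icc_sub hmn, neg_sub]

lemma X_pow_sub_X_pow_ne_zero {n : ℕ} (hn : n ≠ 0) : x ^ n - y ^ n ≠ 0 := by
  intro h
  simpa [hn] using congrArg (eval ![1, 0]) h

open MvPolynomial in
/-- For every h ≥ 5,
s₄[s_h](x,y) = (xy)⁶ s₄[s_{h−3}](x,y) + (xy)⁴ s₄[s_{h−2}](x,y)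
  − (xy)¹⁰ s₄[s_{h−5}](x,y) + s_{(4h)}(x,y) + Σ_{k=2}^{h} s_{(4h−k,k)}(x,y). -/
theorem plethysm_four_recursion (h : ℕ) (hh : 5 ≤ h) :
    pleth2 4 h =
      (X 0 * X 1) ^ 6 * pleth2 4 (h - 3) + (X 0 * X 1) ^ 4 * pleth2 4 (h - 2)
        - (X 0 * X 1) ^ 10 * pleth2 4 (h - 5)
        + schur2 (4 * h) 0 + ∑ k ∈ Finset.Icc 2 h, schur2 (4 * h - k) k := by
  obtain ⟨m, rfl⟩ : ∃ m, h = m + 5 := ⟨h - 5, by omega⟩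
  rw [show m + 5 - 3 = m + 2 by omega, show m + 5 - 2 = m + 3 by omega, Nat.add_sub_cancel]
  have hpleth (k : ℕ) := prod_pow_sub_pow_mul_pleth2 4 k
  simp only [prod_range_succ, prod_range_zero, one_mul, zero_add, pow_one] at hpleth
  have hrow := sub_sq_mul_schur2 (a := 4 * (m + 5)) (Nat.zero_le _)
  have hsum := sub_sq_mul_sum_schur2 (N := 4 * (m + 5)) (show 2 ≤ m + 5 by omega) (by omega)
  rw [show 4 * (m + 5) + 2 - 2 = 4 * m + 20 by omega,
    show 4 * (m + 5) + 2 - (m + 5 + 1) = 3 * m + 16 by omega] at hsum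
  have hD : (x - y) * ((x - y) * (x ^ 2 - y ^ 2) * (x ^ 3 - y ^ 3) * (x ^ 4 - y ^ 4)) ≠ 0 := by
    have h1 : x - y ≠ 0 := by simpa using X_pow_sub_X_pow_ne_zero one_ne_zero
    simp [h1, X_pow_sub_X_pow_ne_zero]
  refine mul_left_cancel₀ hD ?_
  linear_combination (x - y) * (hpleth (m + 5) - (x * y) ^ 6 * hpleth (m + 2)
    - (x * y) ^ 4 * hpleth (m + 3) + (x * y) ^ 10 * hpleth m)
    - (x ^ 2 - y ^ 2) * (x ^ 3 - y ^ 3) * (x ^ 4 - y ^ 4) * (hrow + hsum)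
end
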